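/- arXiv:2211.14973 — 4 statements merged into one kernel-verified Lean document; each statement's English description precedes it below -/
import Mathlib

section
/- For every integer n > 9, Player 2 has a winning strategy in the two-player Tribonacci game on n. -/
/-- The Tribonacci numbers: `T 1 = 1`, `T 2 = 2`, `T 3 = 4`,
`T (i+1) = T i + T (i-1) + T (i-2)` for `i ≥ 3`. -/
def trib : ℕ → ℕ
  | 0 => 0
  | 1 => 1
  | 2 => 2
  | 3 => 4
  | (i + 4) => trib (i + 3) + trib (i + 2) + trib (i + 1)

/-- A legal move of the Tribonacci game, as a relation between the position
before and the position after the move (positions are multisets of naturals). -/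
def TribMove (A B : Multiset ℕ) : Prop :=
  (∃ i, 3 ≤ i ∧ ({trib (i - 2), trib (i - 1), trib i} : Multiset ℕ) ≤ A ∧
      B = A - {trib (i - 2), trib (i - 1), trib i} + {trib (i + 1)}) ∨
  (({1, 1, 2} : Multiset ℕ) ≤ A ∧ B = A - {1, 1, 2} + {4}) ∨
  (({1, 1} : Multiset ℕ) ≤ A ∧ B = A - {1, 1} + {2}) ∨
  (({2, 2} : Multiset ℕ) ≤ A ∧ B = A - {2, 2} + {4}) ∨
  (({4, 4} : Multiset ℕ) ≤ A ∧ B = A - {4, 4} + {7, 1}) ∨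
  (∃ i, 3 < i ∧ ({trib i, trib i} : Multiset ℕ) ≤ A ∧
      B = A - {trib i, trib i} + {trib (i + 1), trib (i - 3)})

/-- A position is terminal when no legal move remains. -/
def Terminal (Move : Multiset ℕ → Multiset ℕ → Prop) (pos : Multiset ℕ) : Prop :=
  ∀ B, ¬ Move pos B

/-- `AllianceWins Move p team t pos`: in the `p`-player game with move relation `Move`,
where players `1, …, p` move cyclically (the mover of the `t`-th move, counting from `t = 0`,
is player `t % p + 1`) and the side making the last legal move wins, the alliance
(set of players) `team` can guarantee, from position `pos` with `t` moves already made,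
that one of its members makes the last move, no matter how the other players play. -/
inductive AllianceWins (Move : Multiset ℕ → Multiset ℕ → Prop) (p : ℕ) (team : ℕ → Prop) :
    ℕ → Multiset ℕ → Prop
  | endMove (t : ℕ) (pos B : Multiset ℕ) (hturn : team (t % p + 1)) (hmove : Move pos B)
      (hterm : Terminal Move B) : AllianceWins Move p team t pos
  | contMove (t : ℕ) (pos B : Multiset ℕ) (hturn : team (t % p + 1)) (hmove : Move pos B)
      (hwin : AllianceWins Move p team (t + 1) B) : AllianceWins Move p team t pos
  | oppMove (t : ℕ) (pos : Multiset ℕ) (hturn : ¬ team (t % p + 1))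
      (hex : ∃ B, Move pos B)
      (hall : ∀ B, Move pos B → AllianceWins Move p team (t + 1) B) :
      AllianceWins Move p team t pos

/-- Player `m` has a winning strategy in the `p`-player game on `n`
(played from `n` copies of `1`, with player 1 moving first). -/
def PlayerWins (Move : Multiset ℕ → Multiset ℕ → Prop) (p m n : ℕ) : Prop :=
  AllianceWins Move p (fun q => q = m) 0 (Multiset.replicate n 1)

/-! ### Auxiliary material for the proof -/

section TribGameAux

local notation "R" k => Multiset.replicate k (1 : ℕ)

/-! #### Basic facts about `trib` -/

lemma trib_def4 (j : ℕ) : trib (j + 4) = trib (j + 3) + trib (j + 2) + trib (j + 1) := rfl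

lemma trib_pos : ∀ j : ℕ, 1 ≤ trib (j + 1) := by
  intro j
  induction j using Nat.strong_induction_on with
  | _ j ih =>
    match j with
    | 0 => decide
    | 1 => decide
    | 2 => decide
    | (k + 3) =>
      have h1 := ih k (by omega)
      show 1 ≤ trib (k + 4)
      rw [trib_def4]
      omega

lemma trib_lt_succ : ∀ j : ℕ, trib (j + 1) < trib (j + 2) := by
  intro j
  match j with
  | 0 => decide
  | 1 => decide
  | (k + 2) =>
    show trib (k + 3) < trib (k + 4)
    rw [trib_def4]
    have h1 := trib_pos k
    have h2 := trib_pos (k + 1)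
    omega

lemma trib_mono {a b : ℕ} (ha : 1 ≤ a) (hab : a ≤ b) : trib a ≤ trib b := by
  induction b, hab using Nat.le_induction with
  | base => exact le_refl _
  | succ b hb ih =>
    have h1 : 1 ≤ b := le_trans ha hb
    obtain ⟨j, rfl⟩ := Nat.exists_eq_add_of_le h1
    have h2 : trib (j + 1) < trib (j + 2) := trib_lt_succ j
    have e1 : 1 + j = j + 1 := by omega
    have e2 : 1 + j + 1 = j + 2 := by omega
    rw [e1] at ih
    rw [e2]
    omega

lemma trib_strict {a b : ℕ} (ha : 1 ≤ a) (hab : a < b) : trib a < trib b := by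
  have h1 : trib a < trib (a + 1) := by
    obtain ⟨j, rfl⟩ := Nat.exists_eq_add_of_le ha
    have := trib_lt_succ j
    have e1 : 1 + j = j + 1 := by omega
    rw [e1]; exact trib_lt_succ j
  have h2 : trib (a + 1) ≤ trib b := trib_mono (by omega) (by omega)
  omega

lemma two_le_trib (j : ℕ) : 2 ≤ trib (j + 2) := by
  have h : trib 2 ≤ trib (j + 2) := trib_mono (by omega) (by omega)
  have h2 : trib 2 = 2 := by decide
  omega

lemma seven_le_trib (j : ℕ) : 7 ≤ trib (j + 4) := by
  have h : trib 4 ≤ trib (j + 4) := trib_mono (by omega) (by omega)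
  have h4 : trib 4 = 7 := by decide
  omega

lemma trib_ne_one (j : ℕ) : trib (j + 2) ≠ 1 := by
  have := two_le_trib j; omega

lemma trib_eq_four {j : ℕ} (h : trib (j + 2) = 4) : j = 1 := by
  match j with
  | 0 => exact absurd h (by decide)
  | 1 => rfl
  | (k + 2) =>
    exfalso
    rw [show k + 2 + 2 = k + 4 by omega] at h
    have := seven_le_trib k
    omega

lemma trib_eq_seven {j : ℕ} (h : trib (j + 2) = 7) : j = 2 := by
  match j with
  | 0 => exact absurd h (by decide)
  | 1 => exact absurd h (by decide)
  | 2 => rfl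
  | (k + 3) =>
    exfalso
    have h5 : trib 5 ≤ trib (k + 5) := trib_mono (by omega) (by omega)
    have : trib 5 = 13 := by decide
    have e : k + 3 + 2 = k + 5 := by omega
    rw [e] at h
    omega

/-! #### Sum and square-sum of positions -/

def sqsum (s : Multiset ℕ) : ℕ := (s.map fun x => x * x).sum

lemma sqsum_add (s t : Multiset ℕ) : sqsum (s + t) = sqsum s + sqsum t := by
  simp [sqsum]

lemma sqsum_le_sq_sum (s : Multiset ℕ) : sqsum s ≤ s.sum * s.sum := by
  induction s using Multiset.induction with
  | empty => simp [sqsum]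
  | cons a s ih =>
    simp only [sqsum, Multiset.map_cons, Multiset.sum_cons] at *
    nlinarith [Nat.zero_le a, Nat.zero_le s.sum]

lemma move_core {A B S T : Multiset ℕ} (hS : S ≤ A) (hB : B = A - S + T)
    (hsum : T.sum = S.sum) (hsq : sqsum S < sqsum T) :
    B.sum = A.sum ∧ sqsum A < sqsum B := by
  have hA : A - S + S = A := tsub_add_cancel_of_le hS
  constructor
  · calc B.sum = (A - S).sum + T.sum := by rw [hB, Multiset.sum_add]
      _ = (A - S).sum + S.sum := by rw [hsum]
      _ = ((A - S) + S).sum := by rw [Multiset.sum_add]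
      _ = A.sum := by rw [hA]
  · calc sqsum A = sqsum ((A - S) + S) := by rw [hA]
      _ = sqsum (A - S) + sqsum S := sqsum_add _ _
      _ < sqsum (A - S) + sqsum T := by omega
      _ = sqsum B := by rw [hB, sqsum_add]

lemma move_sums {A B : Multiset ℕ} (h : TribMove A B) :
    B.sum = A.sum ∧ sqsum A < sqsum B := by
  rcases h with ⟨i, hi, hS, hB⟩ | ⟨hS, hB⟩ | ⟨hS, hB⟩ | ⟨hS, hB⟩ | ⟨hS, hB⟩ | ⟨i, hi, hS, hB⟩
  · obtain ⟨j, rfl⟩ := Nat.exists_eq_add_of_le hi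
    have e2 : 3 + j - 2 = j + 1 := by omega
    have e1 : 3 + j - 1 = j + 2 := by omega
    have e0 : 3 + j = j + 3 := by omega
    have e4 : 3 + j + 1 = j + 4 := by omega
    rw [e2, e1, e0] at hS
    rw [e2, e1, e4, e0] at hB
    have ha := trib_pos j
    have hb := trib_pos (j + 1)
    have hc := trib_pos (j + 2)
    have hx : trib (j + 4) = trib (j + 3) + trib (j + 2) + trib (j + 1) := trib_def4 j
    refine move_core hS hB ?_ ?_
    · simp only [Multiset.insert_eq_cons, Multiset.sum_cons, Multiset.sum_singleton]
      omega
    · simp only [sqsum, Multiset.insert_eq_cons, Multiset.map_cons, Multiset.map_singleton,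
        Multiset.sum_cons, Multiset.sum_singleton]
      nlinarith [ha, hb, hc, hx]
  · exact move_core hS hB (by decide) (by decide)
  · exact move_core hS hB (by decide) (by decide)
  · exact move_core hS hB (by decide) (by decide)
  · exact move_core hS hB (by decide) (by decide)
  · obtain ⟨j, hj⟩ := Nat.exists_eq_add_of_le hi
    have hij : i = j + 4 := by omega
    subst hij
    have e3 : j + 4 - 3 = j + 1 := by omega
    have e5 : j + 4 + 1 = j + 5 := by omega
    rw [e3, e5] at hB
    have hx : trib (j + 4) = trib (j + 3) + trib (j + 2) + trib (j + 1) := trib_def4 j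
    have hy : trib (j + 5) = trib (j + 4) + trib (j + 3) + trib (j + 2) := trib_def4 (j + 1)
    have hs : trib (j + 1) < trib (j + 4) := trib_strict (by omega) (by omega)
    refine move_core hS hB ?_ ?_
    · simp only [Multiset.insert_eq_cons, Multiset.sum_cons, Multiset.sum_singleton]
      omega
    · simp only [sqsum, Multiset.insert_eq_cons, Multiset.map_cons, Multiset.map_singleton,
        Multiset.sum_cons, Multiset.sum_singleton]
      obtain ⟨d, hd⟩ : ∃ d, trib (j + 4) = trib (j + 1) + d + 1 :=
        ⟨trib (j + 4) - trib (j + 1) - 1, by omega⟩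
      have hyv : trib (j + 5) = trib (j + 1) + 2 * d + 2 := by omega
      rw [hd, hyv]
      nlinarith [Nat.zero_le d, Nat.zero_le (trib (j + 1))]

def rank (s : Multiset ℕ) : ℕ := s.sum * s.sum - sqsum s

lemma move_rank {A B : Multiset ℕ} (h : TribMove A B) : rank B < rank A := by
  obtain ⟨hsum, hsq⟩ := move_sums h
  have hle : sqsum B ≤ B.sum * B.sum := sqsum_le_sq_sum B
  rw [hsum] at hle
  unfold rank
  rw [hsum]
  exact Nat.sub_lt_sub_left (lt_of_lt_of_le hsq hle) hsq

/-! #### The classical win predicate -/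

inductive GWin : Multiset ℕ → Prop
  | mk (pos B : Multiset ℕ) (h : TribMove pos B) (hB : ∀ C, TribMove B C → GWin C) : GWin pos

lemma lose_children_aux : ∀ N, ∀ pos : Multiset ℕ, rank pos < N → ¬ GWin pos →
    ∀ B, TribMove pos B → GWin B := by
  intro N
  induction N with
  | zero => omega
  | succ N ih =>
    intro pos hrank hnw B hmove
    by_contra hB
    have hall : ∀ C, TribMove B C → GWin C :=
      ih B (by have := move_rank hmove; omega) hB
    exact hnw (GWin.mk pos B hmove hall)

lemma lose_children {pos : Multiset ℕ} (h : ¬ GWin pos) :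
    ∀ B, TribMove pos B → GWin B :=
  lose_children_aux (rank pos + 1) pos (by omega) h

lemma win_spec_aux : ∀ N, ∀ pos : Multiset ℕ, rank pos < N → GWin pos →
    ∃ B, TribMove pos B ∧ ¬ GWin B := by
  intro N
  induction N with
  | zero => omega
  | succ N ih =>
    intro pos hrank hw
    rcases hw with ⟨pos, B, hmove, hall⟩
    refine ⟨B, hmove, fun hWB => ?_⟩
    obtain ⟨C, hC, hnC⟩ := ih B (by have := move_rank hmove; omega) hWB
    exact hnC (hall C hC)

lemma win_spec {pos : Multiset ℕ} (h : GWin pos) :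
    ∃ B, TribMove pos B ∧ ¬ GWin B :=
  win_spec_aux (rank pos + 1) pos (by omega) h

/-! #### Bridge to `AllianceWins` -/

lemma bridge_aux : ∀ N, ∀ pos : Multiset ℕ, rank pos < N →
    ((GWin pos → ∀ t, t % 2 = 1 → AllianceWins TribMove 2 (fun q => q = 2) t pos) ∧
     ((¬ GWin pos ∧ ∃ B, TribMove pos B) →
       ∀ t, t % 2 = 0 → AllianceWins TribMove 2 (fun q => q = 2) t pos)) := by
  intro N
  induction N with
  | zero => omega
  | succ N ih =>
    intro pos hrank
    constructor
    · intro hw t ht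
      obtain ⟨B, hmove, hnB⟩ := win_spec hw
      by_cases hT : Terminal TribMove B
      · exact AllianceWins.endMove t pos B (show t % 2 + 1 = 2 by omega) hmove hT
      · have hex : ∃ C, TribMove B C := by
          unfold Terminal at hT; push_neg at hT; exact hT
        have hAW := (ih B (by have := move_rank hmove; omega)).2 ⟨hnB, hex⟩ (t + 1) (by omega)
        exact AllianceWins.contMove t pos B (show t % 2 + 1 = 2 by omega) hmove hAW
    · rintro ⟨hnw, hex⟩ t ht
      refine AllianceWins.oppMove t pos (show ¬ (t % 2 + 1 = 2) by omega) hex (fun B hB => ?_)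
      exact (ih B (by have := move_rank hB; omega)).1
        (lose_children hnw B hB) (t + 1) (by omega)

/-! #### Inversion lemmas for the specific positions of the strategy -/

lemma count_R (k : ℕ) {x : ℕ} (hx : x ≠ 1) : Multiset.count x (R k) = 0 := by
  rw [Multiset.count_replicate]; exact if_neg (fun h => hx h.symm)

lemma R_split (m c : ℕ) : (R (m + c)) = (R m) + (R c) := Multiset.replicate_add m c 1

/-- Inversion for `{1^(m+2)}`: the only move is `1,1 → 2`. -/
lemma inv_ones (m : ℕ) (B : Multiset ℕ) (h : TribMove (R (m+2)) B) :
    B = (R m) + {2} := by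
  rcases h with ⟨i, hi, hS, hB⟩ | ⟨hS, hB⟩ | ⟨hS, hB⟩ | ⟨hS, hB⟩ | ⟨hS, hB⟩ | ⟨i, hi, hS, hB⟩
  · exfalso
    obtain ⟨j, rfl⟩ := Nat.exists_eq_add_of_le hi
    have e1 : 3 + j - 1 = j + 2 := by omega
    rw [e1] at hS
    have hmem : trib (j + 2) ∈ (R (m+2)) := Multiset.mem_of_le hS (by simp)
    exact trib_ne_one j (Multiset.eq_of_mem_replicate hmem)
  · exfalso
    have h2 := Multiset.count_le_of_le 2 hS
    rw [count_R (m+2) (by omega)] at h2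
    simp at h2
  · rw [hB, show (R (m+2)) = (R m) + ({1,1} : Multiset ℕ) by rw [R_split m 2]; rfl]
    simp
  · exfalso
    have h2 := Multiset.count_le_of_le 2 hS
    rw [count_R (m+2) (by omega)] at h2
    simp at h2
  · exfalso
    have h2 := Multiset.count_le_of_le 4 hS
    rw [count_R (m+2) (by omega)] at h2
    simp at h2
  · exfalso
    obtain ⟨j, hj⟩ := Nat.exists_eq_add_of_le hi
    have hij : i = j + 4 := by omega
    subst hij
    have hmem : trib (j + 4) ∈ (R (m+2)) := Multiset.mem_of_le hS (by simp)
    have h1 := Multiset.eq_of_mem_replicate hmem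
    have h7 := seven_le_trib j
    omega

/-- Inversion for `Y = {1^(m+6), 4}`: the only move is `1,1 → 2`. -/
lemma inv_Y (m : ℕ) (B : Multiset ℕ) (h : TribMove ((R (m+6)) + {4}) B) :
    B = (R (m+4)) + {2, 4} := by
  have hmem14 : ∀ x : ℕ, x ∈ (R (m+6)) + ({4} : Multiset ℕ) → x = 1 ∨ x = 4 := by
    intro x hx
    rcases Multiset.mem_add.mp hx with h | h
    · exact Or.inl (Multiset.eq_of_mem_replicate h)
    · simp at h; tauto
  have hc2 : Multiset.count 2 ((R (m+6)) + ({4} : Multiset ℕ)) = 0 := by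
    rw [Multiset.count_add, count_R (m+6) (by omega)]; simp
  rcases h with ⟨i, hi, hS, hB⟩ | ⟨hS, hB⟩ | ⟨hS, hB⟩ | ⟨hS, hB⟩ | ⟨hS, hB⟩ | ⟨i, hi, hS, hB⟩
  · exfalso
    obtain ⟨j, rfl⟩ := Nat.exists_eq_add_of_le hi
    have e1 : 3 + j - 1 = j + 2 := by omega
    have e0 : 3 + j = j + 3 := by omega
    rw [e1, e0] at hS
    have hm1 : trib (j + 2) = 1 ∨ trib (j + 2) = 4 := hmem14 _ (Multiset.mem_of_le hS (by simp))
    have hm2 : trib (j + 3) = 1 ∨ trib (j + 3) = 4 := hmem14 _ (Multiset.mem_of_le hS (by simp))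
    rcases hm1 with h1 | h1
    · exact trib_ne_one j h1
    · have hj1 : j = 1 := trib_eq_four h1
      subst hj1
      exact absurd hm2 (by decide)
  · exfalso
    have h2 := Multiset.count_le_of_le 2 hS
    rw [hc2] at h2; simp at h2
  · rw [hB, show (R (m+6)) + ({4} : Multiset ℕ) = ((R (m+4)) + {4}) + ({1,1} : Multiset ℕ) by
      rw [R_split m 6, R_split m 4, show (R 6) = (R 4) + (R 2) from R_split 4 2]
      have : (R 2) = ({1,1} : Multiset ℕ) := rfl
      rw [this]; ac_rfl]
    simp only [add_tsub_cancel_right]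
    have : ({4} : Multiset ℕ) + {2} = ({2, 4} : Multiset ℕ) := by decide
    rw [add_assoc, this]
  · exfalso
    have h2 := Multiset.count_le_of_le 2 hS
    rw [hc2] at h2; simp at h2
  · exfalso
    have h4 := Multiset.count_le_of_le 4 hS
    rw [Multiset.count_add, count_R (m+6) (by omega)] at h4
    simp at h4
  · exfalso
    obtain ⟨j, hj⟩ := Nat.exists_eq_add_of_le hi
    have hij : i = j + 4 := by omega
    subst hij
    have hm : trib (j + 4) = 1 ∨ trib (j + 4) = 4 := hmem14 _ (Multiset.mem_of_le hS (by simp))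
    have h7 := seven_le_trib j
    rcases hm with h1 | h1 <;> omega

/-- Inversion for `E3 = {1^(m+3), 7}`: the only move is `1,1 → 2`. -/
lemma inv_E3 (m : ℕ) (B : Multiset ℕ) (h : TribMove ((R (m+3)) + {7}) B) :
    B = (R (m+1)) + {2, 7} := by
  have hmem17 : ∀ x : ℕ, x ∈ (R (m+3)) + ({7} : Multiset ℕ) → x = 1 ∨ x = 7 := by
    intro x hx
    rcases Multiset.mem_add.mp hx with h | h
    · exact Or.inl (Multiset.eq_of_mem_replicate h)
    · simp at h; tauto
  have hc2 : Multiset.count 2 ((R (m+3)) + ({7} : Multiset ℕ)) = 0 := by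
    rw [Multiset.count_add, count_R (m+3) (by omega)]; simp
  rcases h with ⟨i, hi, hS, hB⟩ | ⟨hS, hB⟩ | ⟨hS, hB⟩ | ⟨hS, hB⟩ | ⟨hS, hB⟩ | ⟨i, hi, hS, hB⟩
  · exfalso
    obtain ⟨j, rfl⟩ := Nat.exists_eq_add_of_le hi
    have e2 : 3 + j - 2 = j + 1 := by omega
    have e1 : 3 + j - 1 = j + 2 := by omega
    rw [e2, e1] at hS
    have hm1 : trib (j + 2) = 1 ∨ trib (j + 2) = 7 := hmem17 _ (Multiset.mem_of_le hS (by simp))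
    rcases hm1 with h1 | h1
    · exact trib_ne_one j h1
    · have hj2 : j = 2 := trib_eq_seven h1
      subst hj2
      have hm0 : trib 3 = 1 ∨ trib 3 = 7 := hmem17 _ (Multiset.mem_of_le hS (by simp))
      revert hm0; decide
  · exfalso
    have h2 := Multiset.count_le_of_le 2 hS
    rw [hc2] at h2; simp at h2
  · rw [hB, show (R (m+3)) + ({7} : Multiset ℕ) = ((R (m+1)) + {7}) + ({1,1} : Multiset ℕ) by
      rw [R_split m 3, R_split m 1, show (R 3) = (R 1) + (R 2) from R_split 1 2]
      have : (R 2) = ({1,1} : Multiset ℕ) := rfl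
      rw [this]; ac_rfl]
    simp only [add_tsub_cancel_right]
    have : ({7} : Multiset ℕ) + {2} = ({2, 7} : Multiset ℕ) := by decide
    rw [add_assoc, this]
  · exfalso
    have h2 := Multiset.count_le_of_le 2 hS
    rw [hc2] at h2; simp at h2
  · exfalso
    have h4 := Multiset.count_le_of_le 4 hS
    rw [Multiset.count_add, count_R (m+3) (by omega)] at h4
    simp at h4
  · exfalso
    obtain ⟨j, hj⟩ := Nat.exists_eq_add_of_le hi
    have hij : i = j + 4 := by omega
    subst hij
    have hm : trib (j + 4) = 1 ∨ trib (j + 4) = 7 := hmem17 _ (Multiset.mem_of_le hS (by simp))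
    have h7 := seven_le_trib j
    rcases hm with h1 | h1
    · omega
    · have hj0 : j = 0 := by
        have := trib_eq_seven (j := j + 2) (by rw [show j + 2 + 2 = j + 4 by omega]; exact h1)
        omega
      subst hj0
      rw [h1] at hS
      have h7c := Multiset.count_le_of_le 7 hS
      rw [Multiset.count_add, count_R (m+3) (by omega)] at h7c
      simp at h7c
/-- Inversion for `E2 = {1^(m+2), 4, 4}`: the moves are `1,1 → 2` and `4,4 → 7,1`. -/
lemma inv_E2 (m : ℕ) (B : Multiset ℕ) (h : TribMove ((R (m+2)) + {4, 4}) B) :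
    B = (R m) + {2, 4, 4} ∨ B = (R (m+3)) + {7} := by
  have hmem14 : ∀ x : ℕ, x ∈ (R (m+2)) + ({4, 4} : Multiset ℕ) → x = 1 ∨ x = 4 := by
    intro x hx
    rcases Multiset.mem_add.mp hx with h | h
    · exact Or.inl (Multiset.eq_of_mem_replicate h)
    · simp at h; tauto
  have hc2 : Multiset.count 2 ((R (m+2)) + ({4, 4} : Multiset ℕ)) = 0 := by
    rw [Multiset.count_add, count_R (m+2) (by omega)]; simp
  rcases h with ⟨i, hi, hS, hB⟩ | ⟨hS, hB⟩ | ⟨hS, hB⟩ | ⟨hS, hB⟩ | ⟨hS, hB⟩ | ⟨i, hi, hS, hB⟩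
  · exfalso
    obtain ⟨j, rfl⟩ := Nat.exists_eq_add_of_le hi
    have e1 : 3 + j - 1 = j + 2 := by omega
    have e0 : 3 + j = j + 3 := by omega
    rw [e1, e0] at hS
    have hm1 : trib (j + 2) = 1 ∨ trib (j + 2) = 4 := hmem14 _ (Multiset.mem_of_le hS (by simp))
    have hm2 : trib (j + 3) = 1 ∨ trib (j + 3) = 4 := hmem14 _ (Multiset.mem_of_le hS (by simp))
    rcases hm1 with h1 | h1
    · exact trib_ne_one j h1
    · have hj1 : j = 1 := trib_eq_four h1
      subst hj1
      exact absurd hm2 (by decide)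
  · exfalso
    have h2 := Multiset.count_le_of_le 2 hS
    rw [hc2] at h2; simp at h2
  · left
    rw [hB, show (R (m+2)) + ({4, 4} : Multiset ℕ) = ((R m) + {4, 4}) + ({1,1} : Multiset ℕ) by
      rw [R_split m 2]
      have : (R 2) = ({1,1} : Multiset ℕ) := rfl
      rw [this]; ac_rfl]
    simp only [add_tsub_cancel_right]
    have : ({4, 4} : Multiset ℕ) + {2} = ({2, 4, 4} : Multiset ℕ) := by decide
    rw [add_assoc, this]
  · exfalso
    have h2 := Multiset.count_le_of_le 2 hS
    rw [hc2] at h2; simp at h2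
  · right
    rw [hB, show (R (m+2)) + ({4, 4} : Multiset ℕ) = (R (m+2)) + ({4,4} : Multiset ℕ) from rfl]
    rw [add_tsub_cancel_right]
    rw [show (R (m+3)) = (R (m+2)) + (R 1) from R_split (m+2) 1]
    have : ((R 1) : Multiset ℕ) + {7} = ({7, 1} : Multiset ℕ) := by decide
    rw [add_assoc, this]
  · exfalso
    obtain ⟨j, hj⟩ := Nat.exists_eq_add_of_le hi
    have hij : i = j + 4 := by omega
    subst hij
    have hm : trib (j + 4) = 1 ∨ trib (j + 4) = 4 := hmem14 _ (Multiset.mem_of_le hS (by simp))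
    have h7 := seven_le_trib j
    rcases hm with h1 | h1 <;> omega

/-! #### Constructions of the specific moves -/

lemma mv_start (m : ℕ) : TribMove (R (m+10)) ((R (m+8)) + {2}) := by
  have hA : (R (m+10)) = (R (m+8)) + ({1,1} : Multiset ℕ) := by
    rw [show m + 10 = m + 8 + 2 by omega, R_split (m+8) 2]; rfl
  refine Or.inr (Or.inr (Or.inl ⟨?_, ?_⟩))
  · rw [hA]; exact le_add_self
  · rw [hA, add_tsub_cancel_right]

lemma mv_s2_Y (m : ℕ) : TribMove ((R (m+8)) + {2}) ((R (m+6)) + {4}) := by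
  have hA : (R (m+8)) + ({2} : Multiset ℕ) = (R (m+6)) + ({1,1,2} : Multiset ℕ) := by
    rw [show m + 8 = m + 6 + 2 by omega, R_split (m+6) 2, add_assoc]
    congr 1 <;> decide
  refine Or.inr (Or.inl ⟨?_, ?_⟩)
  · rw [hA]; exact le_add_self
  · rw [hA, add_tsub_cancel_right]

lemma mv_y_E3 (m : ℕ) : TribMove ((R (m+4)) + {2, 4}) ((R (m+3)) + {7}) := by
  have hv : ({trib (3-2), trib (3-1), trib 3} : Multiset ℕ) = {1,2,4} := by decide
  have hv2 : ({trib (3+1)} : Multiset ℕ) = {7} := by decide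
  have hA : (R (m+4)) + ({2, 4} : Multiset ℕ) = (R (m+3)) + ({1,2,4} : Multiset ℕ) := by
    rw [show m + 4 = m + 3 + 1 by omega, R_split (m+3) 1, add_assoc]
    congr 1 <;> decide
  refine Or.inl ⟨3, le_refl 3, ?_, ?_⟩
  · rw [hv, hA]; exact le_add_self
  · rw [hv, hv2, hA, add_tsub_cancel_right]

lemma mv_y_E2 (m : ℕ) : TribMove ((R (m+4)) + {2, 4}) ((R (m+2)) + {4, 4}) := by
  have hA : (R (m+4)) + ({2, 4} : Multiset ℕ) = ((R (m+2)) + {4}) + ({1,1,2} : Multiset ℕ) := by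
    rw [show m + 4 = m + 2 + 2 by omega, R_split (m+2) 2, add_assoc, add_assoc]
    congr 1 <;> decide
  have hB : ((R (m+2)) + ({4} : Multiset ℕ)) + {4} = (R (m+2)) + ({4,4} : Multiset ℕ) := by
    rw [add_assoc]
    congr 1 <;> decide
  refine Or.inr (Or.inl ⟨?_, ?_⟩)
  · rw [hA]; exact le_add_self
  · rw [hA, add_tsub_cancel_right, hB]

lemma mv_F_u (m : ℕ) : TribMove ((R m) + {2, 4, 4}) ((R (m+1)) + {2, 7}) := by
  have hA : (R m) + ({2, 4, 4} : Multiset ℕ) = ((R m) + {2}) + ({4,4} : Multiset ℕ) := by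
    rw [add_assoc]
    congr 1 <;> decide
  have hB : ((R m) + ({2} : Multiset ℕ)) + ({7,1} : Multiset ℕ)
      = (R (m+1)) + ({2, 7} : Multiset ℕ) := by
    rw [R_split m 1, add_assoc, add_assoc]
    congr 1 <;> decide
  refine Or.inr (Or.inr (Or.inr (Or.inr (Or.inl ⟨?_, ?_⟩))))
  · rw [hA]; exact le_add_self
  · rw [hA, add_tsub_cancel_right, hB]

/-! #### The key fact: `{1^(m+8), 2}` is a winning position -/

lemma win_s2 (m : ℕ) : GWin ((R (m+8)) + {2}) := by
  by_contra hns2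
  -- Y = {1^(m+6), 4} is then winning
  have hWY : GWin ((R (m+6)) + {4}) := lose_children hns2 _ (mv_s2_Y m)
  -- its unique child y = {1^(m+4), 2, 4} is then losing
  obtain ⟨c, hc, hnc⟩ := win_spec hWY
  rw [inv_Y m c hc] at hnc
  -- so E3 = {1^(m+3), 7} and E2 = {1^(m+2), 4, 4} are winning
  have hWE3 : GWin ((R (m+3)) + {7}) := lose_children hnc _ (mv_y_E3 m)
  have hWE2 : GWin ((R (m+2)) + {4, 4}) := lose_children hnc _ (mv_y_E2 m)
  -- the unique child u = {1^(m+1), 2, 7} of E3 is losing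
  obtain ⟨c3, hc3, hn3⟩ := win_spec hWE3
  rw [inv_E3 m c3 hc3] at hn3
  -- E2 has some losing child, which must be F = {1^m, 2, 4, 4} (E3 is winning)
  obtain ⟨c2, hc2, hn2⟩ := win_spec hWE2
  rcases inv_E2 m c2 hc2 with hF | hE3
  · rw [hF] at hn2
    -- F losing, but F has the child u, so u is winning: contradiction
    exact hn3 (lose_children hn2 _ (mv_F_u m))
  · rw [hE3] at hn2
    exact hn2 hWE3

end TribGameAux

/-- For every integer `n > 9`, Player 2 has a winning strategy in the
two-player Tribonacci game on `n`. -/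
theorem two_player_tribonacci_player_two_wins (n : ℕ) (hn : 9 < n) :
    PlayerWins TribMove 2 2 n := by
  obtain ⟨m, rfl⟩ : ∃ m, n = m + 10 := ⟨n - 10, by omega⟩
  show AllianceWins TribMove 2 (fun q => q = 2) 0 (Multiset.replicate (m + 10) 1)
  have hnw : ¬ GWin (Multiset.replicate (m + 10) 1) := by
    intro hw
    obtain ⟨B, hB, hnB⟩ := win_spec hw
    have hinv := inv_ones (m + 8) B (by rw [show m + 8 + 2 = m + 10 by omega]; exact hB)
    rw [hinv] at hnB
    exact hnB (win_s2 m)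
  have hex : ∃ B, TribMove (Multiset.replicate (m + 10) 1) B :=
    ⟨_, mv_start m⟩
  exact (bridge_aux (rank (Multiset.replicate (m + 10) 1) + 1) _ (by omega)).2
    ⟨hnw, hex⟩ 0 (by omega)
end

section
/- In the two-player (c,1)-nacci Zeckendorf game on n, for every c >= 1 and every n >= (c+1)^3 + (c+1): if c is odd then Player 2 has a winning strategy, and if c is even then Player 1 has a winning strategy. -/
/-- The `(c,k)`-nacci numbers: `nacci c k 1 = 1`,
`nacci c k (i+1) = c * (nacci c k i + ⋯ + nacci c k 1) + 1` for `1 ≤ i ≤ k`, and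
`nacci c k (i+1) = c * (nacci c k i + ⋯ + nacci c k (i-k))` for `i ≥ k + 1`.
(The value at `0` is junk.) -/
def nacci (c k : ℕ) : ℕ → ℕ
  | 0 => 0
  | 1 => 1
  | (i + 2) =>
    if i + 1 ≤ k then
      c * ((Finset.range (i + 1)).attach.sum fun j => nacci c k (j.1 + 1)) + 1
    else
      c * ((Finset.Icc (i + 1 - k) (i + 1)).attach.sum fun j => nacci c k j.1)
decreasing_by
  · have hj := j.2
    simp only [Finset.mem_range] at hj
    omega
  · have hj := j.2
    simp only [Finset.mem_Icc] at hj
    omega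


/-- The multiset consisting of `c` copies of `nacci c k j` for each `j` in the
finite set `s`. -/
def nacciBlock (c k : ℕ) (s : Finset ℕ) : Multiset ℕ :=
  s.val.bind fun j => Multiset.replicate c (nacci c k j)

/-- A legal move of the `(c,k)`-nacci Zeckendorf game, as a relation between the
position before and the position after the move (positions are multisets of naturals). -/
def CkMove (c k : ℕ) (A B : Multiset ℕ) : Prop :=
  -- (1) for `i ≥ k+1`: `c` copies each of `S_{i-k}, …, S_i` become `S_{i+1}`
  (∃ i, k + 1 ≤ i ∧ nacciBlock c k (Finset.Icc (i - k) i) ≤ A ∧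
    B = A - nacciBlock c k (Finset.Icc (i - k) i) + {nacci c k (i + 1)}) ∨
  -- (2) for `2 ≤ i ≤ k`: `c+1` copies of `S_1` and `c` copies each of `S_2, …, S_i`
  -- become `S_{i+1}`
  (∃ i, 2 ≤ i ∧ i ≤ k ∧
    Multiset.replicate (c + 1) (nacci c k 1) + nacciBlock c k (Finset.Icc 2 i) ≤ A ∧
    B = A - (Multiset.replicate (c + 1) (nacci c k 1) + nacciBlock c k (Finset.Icc 2 i))
        + {nacci c k (i + 1)}) ∨
  -- (3) `c+1` copies of `S_1` become `S_2`
  (Multiset.replicate (c + 1) (nacci c k 1) ≤ A ∧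
    B = A - Multiset.replicate (c + 1) (nacci c k 1) + {nacci c k 2}) ∨
  -- (3) for `1 < i < k+1`: `c+1` copies of `S_i` become `S_{i+1}`
  (∃ i, 1 < i ∧ i < k + 1 ∧ Multiset.replicate (c + 1) (nacci c k i) ≤ A ∧
    B = A - Multiset.replicate (c + 1) (nacci c k i) + {nacci c k (i + 1)}) ∨
  -- (3) `c+1` copies of `S_{k+1}` become `S_{k+2}` and `S_1`
  (Multiset.replicate (c + 1) (nacci c k (k + 1)) ≤ A ∧
    B = A - Multiset.replicate (c + 1) (nacci c k (k + 1))
        + {nacci c k (k + 2), nacci c k 1}) ∨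
  -- (3) for `i > k+1`: `c+1` copies of `S_i` become `S_{i+1}` and `c` copies of `S_{i-k-1}`
  (∃ i, k + 1 < i ∧ Multiset.replicate (c + 1) (nacci c k i) ≤ A ∧
    B = A - Multiset.replicate (c + 1) (nacci c k i)
        + ({nacci c k (i + 1)} + Multiset.replicate c (nacci c k (i - k - 1))))

namespace TPZ

lemma nacci_one (c : ℕ) : nacci c 1 1 = 1 := by rw [nacci]

lemma nacci_two (c : ℕ) : nacci c 1 2 = c + 1 := by
  show nacci c 1 (0 + 2) = c + 1
  rw [nacci, if_pos (by omega),
    Finset.sum_attach (Finset.range 1) (fun v => nacci c 1 (v + 1)),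
    Finset.sum_range_one, nacci_one, Nat.mul_one]

lemma nacci_rec (c i : ℕ) : nacci c 1 (i + 3) = c * (nacci c 1 (i + 1) + nacci c 1 (i + 2)) := by
  show nacci c 1 ((i + 1) + 2) = _
  rw [nacci, if_neg (by omega)]
  rw [Finset.sum_attach (Finset.Icc (i + 1 + 1 - 1) (i + 1 + 1)) (fun j => nacci c 1 j)]
  have h1 : i + 1 + 1 - 1 = i + 1 := by omega
  rw [h1, Finset.sum_Icc_succ_top (by omega : i + 1 ≤ i + 1 + 1), Finset.Icc_self,
    Finset.sum_singleton]

lemma nacci_three (c : ℕ) : nacci c 1 3 = c * (c + 2) := by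
  rw [show (3:ℕ) = 0 + 3 from rfl, nacci_rec, nacci_one, nacci_two]; ring_nf

lemma nacci_four (c : ℕ) : nacci c 1 4 = c * (c + 1 + c * (c + 2)) := by
  rw [show (4:ℕ) = 1 + 3 from rfl, nacci_rec, nacci_two, nacci_three]

variable {c : ℕ}

lemma nacci_pos (hc : 1 ≤ c) : ∀ i, 1 ≤ nacci c 1 (i + 1) := by
  have key : ∀ i, 1 ≤ nacci c 1 (i + 1) ∧ 1 ≤ nacci c 1 (i + 2) := by
    intro i
    induction i with
    | zero => rw [nacci_one, nacci_two]; omega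
    | succ t ih =>
      refine ⟨ih.2, ?_⟩
      rw [nacci_rec]
      have h := Nat.mul_pos (show 0 < c by omega)
        (show 0 < nacci c 1 (t + 1) + nacci c 1 (t + 2) by omega)
      omega
  exact fun i => (key i).1

lemma nacci_lt_succ (hc : 1 ≤ c) : ∀ i, 1 ≤ i → nacci c 1 i < nacci c 1 (i + 1) := by
  intro i hi
  rcases i with _ | i
  · omega
  rcases i with _ | t
  · rw [nacci_one, nacci_two]; omega
  · rw [show t + 1 + 1 + 1 = t + 3 from rfl, nacci_rec]
    have h1 := nacci_pos hc t
    have h2 := nacci_pos hc (t + 1)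
    have h := Nat.mul_le_mul hc (Nat.le_refl (nacci c 1 (t + 1) + nacci c 1 (t + 2)))
    have : nacci c 1 (t + 1 + 1) = nacci c 1 (t + 2) := rfl
    omega

lemma nacci_lt (hc : 1 ≤ c) (i t : ℕ) (hi : 1 ≤ i) (hit : i < t) : nacci c 1 i < nacci c 1 t := by
  induction t with
  | zero => omega
  | succ u ih =>
    rcases Nat.lt_or_ge i u with h | h
    · exact lt_trans (ih h) (nacci_lt_succ hc u (by omega))
    · have : i = u := by omega
      subst this
      exact nacci_lt_succ hc i hi

/-! ### Measure and termination -/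

def msq (A : Multiset ℕ) : ℕ := (A.map (fun x => x * x)).sum

lemma msq_le_sq (A : Multiset ℕ) : msq A ≤ A.sum * A.sum := by
  induction A using Multiset.induction with
  | empty => simp [msq]
  | cons a s ih =>
    simp only [msq, Multiset.map_cons, Multiset.sum_cons] at *
    nlinarith [Nat.zero_le (s.sum), Nat.zero_le a]

def meas (A : Multiset ℕ) : ℕ := A.sum * A.sum + Multiset.card A - msq A

lemma msq_add (A B : Multiset ℕ) : msq (A + B) = msq A + msq B := by
  simp [msq]

lemma msq_replicate (n a : ℕ) : msq (Multiset.replicate n a) = n * (a * a) := by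
  simp [msq, Multiset.map_replicate, Multiset.sum_replicate]

lemma msq_singleton (a : ℕ) : msq {a} = a * a := by simp [msq]

lemma msq_cons (a : ℕ) (s : Multiset ℕ) : msq (a ::ₘ s) = a * a + msq s := by simp [msq]

lemma blockEq (i : ℕ) :
    nacciBlock c 1 (Finset.Icc i (i + 1)) =
      Multiset.replicate c (nacci c 1 i) + Multiset.replicate c (nacci c 1 (i + 1)) := by
  have h1 : Finset.Icc i (i + 1) = insert i ({i + 1} : Finset ℕ) := by
    ext x
    simp only [Finset.mem_Icc, Finset.mem_insert, Finset.mem_singleton]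
    omega
  have h2 : (insert i ({i + 1} : Finset ℕ)).val = i ::ₘ ({i + 1} : Finset ℕ).val :=
    Finset.insert_val_of_notMem (by simp)
  rw [nacciBlock, h1, h2]
  simp [Multiset.cons_bind, Multiset.singleton_bind]

/-- The key decrease facts for one move: sum preserved, card not increased,
sum of squares strictly increased. -/
lemma move_facts (hc : 1 ≤ c) {A B : Multiset ℕ} (h : CkMove c 1 A B) :
    B.sum = A.sum ∧ Multiset.card B ≤ Multiset.card A ∧ msq A < msq B := by
  have core : ∀ (R I Q : Multiset ℕ), A = R + Q → B = A - R + I →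
      I.sum = R.sum → Multiset.card I ≤ Multiset.card R → msq R < msq I →
      B.sum = A.sum ∧ Multiset.card B ≤ Multiset.card A ∧ msq A < msq B := by
    intro R I Q hA hB hsum hcard hsq
    subst hA
    rw [add_tsub_cancel_left] at hB
    subst hB
    simp only [Multiset.sum_add, Multiset.card_add, msq_add]
    omega
  rcases h with ⟨i, hi, hle, hB⟩ | ⟨i, hi1, hi2, _, _⟩ | ⟨hle, hB⟩ | ⟨i, hi1, hi2, _, _⟩ |
    ⟨hle, hB⟩ | ⟨i, hi, hle, hB⟩
  · -- type (1) : i ≥ 2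
    obtain ⟨t, rfl⟩ : ∃ t, i = t + 2 := ⟨i - 2, by omega⟩
    have hIcc : t + 2 - 1 = t + 1 := by omega
    rw [hIcc] at hle hB
    have hbl := blockEq (c := c) (t + 1)
    rw [show t + 1 + 1 = t + 2 from rfl] at hbl
    rw [hbl] at hle hB
    obtain ⟨Q, hQ⟩ := Multiset.le_iff_exists_add.1 hle
    refine core _ _ _ hQ hB ?_ ?_ ?_
    · simp only [Multiset.sum_singleton, Multiset.sum_add, Multiset.sum_replicate, smul_eq_mul]
      rw [show t + 2 + 1 = t + 3 from rfl, nacci_rec]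
      ring
    · simp only [Multiset.card_singleton, Multiset.card_add, Multiset.card_replicate]
      omega
    · rw [msq_add, msq_replicate, msq_replicate, msq_singleton]
      rw [show t + 2 + 1 = t + 3 from rfl, nacci_rec]
      have h1 := nacci_pos hc t
      have h2 := nacci_pos hc (t + 1)
      set x := nacci c 1 (t + 1)
      set y := nacci c 1 (t + 2)
      nlinarith [Nat.mul_le_mul hc hc, Nat.mul_le_mul h1 h2, hc, h1, h2]
  · omega
  · -- type (3a)
    obtain ⟨Q, hQ⟩ := Multiset.le_iff_exists_add.1 hle
    refine core _ _ _ hQ hB ?_ ?_ ?_ <;>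
      simp only [Multiset.sum_singleton, Multiset.sum_replicate, smul_eq_mul,
        Multiset.card_singleton, Multiset.card_replicate, msq_replicate, msq_singleton,
        nacci_one, nacci_two]
    · omega
    · omega
    · nlinarith [hc]
  · omega
  · -- type (3c) : c+1 copies of S_2 → S_3 and S_1
    obtain ⟨Q, hQ⟩ := Multiset.le_iff_exists_add.1 hle
    simp only [show (1:ℕ) + 1 = 2 from rfl, show (1:ℕ) + 2 = 3 from rfl, nacci_one, nacci_two,
      nacci_three] at hQ hB
    refine core _ _ _ hQ hB ?_ ?_ ?_
    · simp only [Multiset.insert_eq_cons, Multiset.sum_cons, Multiset.sum_singleton,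
        Multiset.sum_replicate, smul_eq_mul]
      ring
    · simp only [Multiset.insert_eq_cons, Multiset.card_cons, Multiset.card_singleton,
        Multiset.card_replicate]
      omega
    · simp only [Multiset.insert_eq_cons, msq_cons, msq_singleton, msq_replicate]
      nlinarith [hc]
  · -- type (3d) : i > 2
    obtain ⟨t, rfl⟩ : ∃ t, i = t + 3 := ⟨i - 3, by omega⟩
    obtain ⟨Q, hQ⟩ := Multiset.le_iff_exists_add.1 hle
    have hsub : t + 3 - 1 - 1 = t + 1 := by omega
    rw [hsub] at hB
    have hx := nacci_pos hc t
    have hy := nacci_pos hc (t + 1)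
    have hxy : nacci c 1 (t + 1) < nacci c 1 (t + 2) := nacci_lt_succ hc (t + 1) (by omega)
    have hz : nacci c 1 (t + 3) = c * (nacci c 1 (t + 1) + nacci c 1 (t + 2)) := nacci_rec c t
    have hw : nacci c 1 (t + 3 + 1) = c * (nacci c 1 (t + 2) + nacci c 1 (t + 3)) := by
      rw [show t + 3 + 1 = (t + 1) + 3 from rfl, nacci_rec]
    refine core _ _ _ hQ hB ?_ ?_ ?_
    · simp only [Multiset.sum_add, Multiset.sum_singleton, Multiset.sum_replicate, smul_eq_mul,
        hz, hw]
      ring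
    · simp only [Multiset.card_add, Multiset.card_singleton, Multiset.card_replicate]
      omega
    · rw [msq_add, msq_singleton, msq_replicate, msq_replicate]
      set x := nacci c 1 (t + 1)
      set y := nacci c 1 (t + 2)
      set z := nacci c 1 (t + 3)
      clear_value x y z
      have hzy : z = c * (x + y) := hz
      have hwy : nacci c 1 (t + 3 + 1) = c * (y + z) := hw
      rw [hwy]
      zify at *
      nlinarith [mul_pos (show (0:ℤ) < c by omega) (show (0:ℤ) < y by omega),
        mul_le_mul_of_nonneg_right (show (c:ℤ) ≤ c*c by nlinarith)
          (show (0:ℤ) ≤ z*z by positivity),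
        mul_pos (mul_pos (show (0:ℤ) < c by omega) (show (0:ℤ) < c by omega))
          (mul_pos (show (0:ℤ) < y by omega) (show (0:ℤ) < y by omega)),
        mul_le_mul_of_nonneg_right (show (z:ℤ) ≤ 2*c*y by nlinarith)
          (show (0:ℤ) ≤ z by positivity)]

lemma meas_lt (hc : 1 ≤ c) {A B : Multiset ℕ} (h : CkMove c 1 A B) : meas B < meas A := by
  obtain ⟨h1, h2, h3⟩ := move_facts hc h
  have hB' := msq_le_sq B
  have hA' := msq_le_sq A
  unfold meas
  rw [h1] at hB' ⊢
  omega

lemma moveRel_wf (hc : 1 ≤ c) : WellFounded (fun B A => CkMove c 1 A B) :=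
  Subrelation.wf (fun {B A} h => meas_lt hc h) (InvImage.wf meas Nat.lt_wfRel.wf)

/-! ### The normal-play win predicate -/

noncomputable def Win (c : ℕ) (hc : 1 ≤ c) : Multiset ℕ → Prop :=
  (moveRel_wf hc).fix (fun A ih => ∃ B, ∃ h : CkMove c 1 A B, ¬ ih B h)

lemma win_iff {c : ℕ} (hc : 1 ≤ c) (A : Multiset ℕ) :
    Win c hc A ↔ ∃ B, CkMove c 1 A B ∧ ¬ Win c hc B := by
  unfold Win
  rw [WellFounded.fix_eq]
  constructor
  · rintro ⟨B, h, hn⟩; exact ⟨B, h, hn⟩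
  · rintro ⟨B, h, hn⟩; exact ⟨B, h, hn⟩

lemma win_of_move {c : ℕ} (hc : 1 ≤ c) {A B : Multiset ℕ} (h : CkMove c 1 A B)
    (hB : ¬ Win c hc B) : Win c hc A :=
  (win_iff hc A).2 ⟨B, h, hB⟩

lemma move_win {c : ℕ} (hc : 1 ≤ c) {A B : Multiset ℕ} (hA : ¬ Win c hc A)
    (h : CkMove c 1 A B) : Win c hc B := by
  by_contra hB
  exact hA (win_of_move hc h hB)

/-! ### Bridge to `AllianceWins` -/

lemma bridge {c : ℕ} (hc : 1 ≤ c) : ∀ A : Multiset ℕ, ∀ t m : ℕ,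
    ((m = t % 2 + 1 → Win c hc A →
        AllianceWins (CkMove c 1) 2 (fun q => q = m) t A) ∧
     (m ≠ t % 2 + 1 → 1 ≤ m → m ≤ 2 → ¬ Win c hc A → (∃ B, CkMove c 1 A B) →
        AllianceWins (CkMove c 1) 2 (fun q => q = m) t A)) := by
  intro A
  induction A using (moveRel_wf hc).induction with
  | _ A ih =>
    intro t m
    constructor
    · intro hm hw
      obtain ⟨B, hmove, hB⟩ := (win_iff hc A).1 hw
      by_cases hterm : ∀ C, ¬ CkMove c 1 B C
      · exact AllianceWins.endMove t A B (by simpa using hm.symm) hmove hterm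
      · push_neg at hterm
        refine AllianceWins.contMove t A B (by simpa using hm.symm) hmove ?_
        exact (ih B hmove (t + 1) m).2 (by omega) (by omega) (by omega) hB hterm
    · intro hm hm1 hm2 hw hex
      refine AllianceWins.oppMove t A (by simpa using fun h => hm h.symm) hex ?_
      intro B hmove
      exact (ih B hmove (t + 1) m).1 (by omega) (move_win hc hw hmove)

/-! ### Positions of the `(c,1)` game -/

/-- `pos c o j b m`: `o` ones, `j` copies of `S_2`, `b` copies of `S_3`, `m` copies of `S_4`. -/
def pos (c o j b m : ℕ) : Multiset ℕ :=
  Multiset.replicate o 1 + Multiset.replicate j (nacci c 1 2) +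
    Multiset.replicate b (nacci c 1 3) + Multiset.replicate m (nacci c 1 4)

lemma posO (c o t j b m : ℕ) :
    pos c (o + t) j b m = Multiset.replicate t 1 + pos c o j b m := by
  unfold pos
  rw [Multiset.replicate_add]
  abel

lemma posJ (c o t j b m : ℕ) :
    pos c o (j + t) b m = Multiset.replicate t (nacci c 1 2) + pos c o j b m := by
  unfold pos
  rw [Multiset.replicate_add (m := j)]
  abel

lemma posB (c o t j b m : ℕ) :
    pos c o j (b + t) m = Multiset.replicate t (nacci c 1 3) + pos c o j b m := by
  unfold pos
  rw [Multiset.replicate_add (m := b)]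
  abel

lemma posM (c o t j b m : ℕ) :
    pos c o j b (m + t) = Multiset.replicate t (nacci c 1 4) + pos c o j b m := by
  unfold pos
  rw [Multiset.replicate_add (m := m)]
  abel

section Counts

variable {c : ℕ}

lemma d12 (hc : 1 ≤ c) : 1 < nacci c 1 2 := by rw [nacci_two]; omega
lemma d23 (hc : 1 ≤ c) : nacci c 1 2 < nacci c 1 3 := nacci_lt_succ hc 2 (by omega)
lemma d34 (hc : 1 ≤ c) : nacci c 1 3 < nacci c 1 4 := nacci_lt_succ hc 3 (by omega)

lemma count_pos_eq (hc : 1 ≤ c) (o j b m x : ℕ) :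
    Multiset.count x (pos c o j b m) =
      (if x = 1 then o else 0) + (if x = nacci c 1 2 then j else 0) +
        (if x = nacci c 1 3 then b else 0) + (if x = nacci c 1 4 then m else 0) := by
  simp only [pos, Multiset.count_add, Multiset.count_replicate]
  have h2 := d12 hc
  have h3 := d23 hc
  have h4 := d34 hc
  split_ifs <;> omega

lemma count_one (hc : 1 ≤ c) (o j b m : ℕ) : Multiset.count 1 (pos c o j b m) = o := by
  have h2 := d12 hc
  have h3 := d23 hc
  have h4 := d34 hc
  rw [count_pos_eq hc]
  split_ifs <;> omega

lemma count_two (hc : 1 ≤ c) (o j b m : ℕ) : Multiset.count (nacci c 1 2) (pos c o j b m) = j := by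
  have h2 := d12 hc
  have h3 := d23 hc
  have h4 := d34 hc
  rw [count_pos_eq hc]
  split_ifs <;> omega

lemma count_three (hc : 1 ≤ c) (o j b m : ℕ) : Multiset.count (nacci c 1 3) (pos c o j b m) = b := by
  have h2 := d12 hc
  have h3 := d23 hc
  have h4 := d34 hc
  rw [count_pos_eq hc]
  split_ifs <;> omega

lemma count_four (hc : 1 ≤ c) (o j b m : ℕ) : Multiset.count (nacci c 1 4) (pos c o j b m) = m := by
  have h2 := d12 hc
  have h3 := d23 hc
  have h4 := d34 hc
  rw [count_pos_eq hc]
  split_ifs <;> omega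

lemma shape_of_count (hc : 1 ≤ c) (o j b m x : ℕ) (h : 0 < Multiset.count x (pos c o j b m)) :
    x = 1 ∨ x = nacci c 1 2 ∨ x = nacci c 1 3 ∨ x = nacci c 1 4 := by
  by_contra hx
  push_neg at hx
  rw [count_pos_eq hc, if_neg hx.1, if_neg hx.2.1, if_neg hx.2.2.1, if_neg hx.2.2.2] at h
  omega

lemma nacci_inj (hc : 1 ≤ c) (i t : ℕ) (hi : 1 ≤ i) (ht : 1 ≤ t) (h : nacci c 1 i = nacci c 1 t) :
    i = t := by
  rcases Nat.lt_trichotomy i t with hlt | heq | hgt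
  · exact absurd h (Nat.ne_of_lt (nacci_lt hc i t hi hlt))
  · exact heq
  · exact absurd h.symm (Nat.ne_of_lt (nacci_lt hc t i ht hgt))

lemma repl_le_count {t x : ℕ} {A : Multiset ℕ}
    (h : Multiset.replicate t x ≤ A) : t ≤ Multiset.count x A := by
  have := Multiset.le_iff_count.1 h x
  rwa [Multiset.count_replicate, if_pos rfl] at this

end Counts

/-! ### Move constructors -/

section Moves

variable {c : ℕ} (hc : 1 ≤ c)

lemma moveA (o j b m : ℕ) :
    CkMove c 1 (pos c (o + (c + 1)) j b m) (pos c o (j + 1) b m) := by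
  refine Or.inr (Or.inr (Or.inl ⟨?_, ?_⟩))
  · rw [nacci_one, posO]
    exact Multiset.le_add_right _ _
  · rw [nacci_one, posO, add_tsub_cancel_left, posJ, add_comm]
    rfl

lemma moveB (o j b m : ℕ) :
    CkMove c 1 (pos c (o + c) (j + c) b m) (pos c o j (b + 1) m) := by
  refine Or.inl ⟨2, le_refl _, ?_, ?_⟩
  · have hb := blockEq (c := c) 1
    norm_num at hb ⊢
    rw [hb, nacci_one, posO, posJ]
    calc Multiset.replicate c 1 + Multiset.replicate c (nacci c 1 2) ≤
        Multiset.replicate c 1 + (Multiset.replicate c (nacci c 1 2) + pos c o j b m) := by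
          rw [← add_assoc]; exact Multiset.le_add_right _ _
      _ = _ := by abel
  · have hb := blockEq (c := c) 1
    norm_num at hb ⊢
    rw [hb, nacci_one, posO, posJ]
    have : Multiset.replicate c 1 + (Multiset.replicate c (nacci c 1 2) + pos c o j b m) =
        (Multiset.replicate c 1 + Multiset.replicate c (nacci c 1 2)) + pos c o j b m := by
      abel
    rw [this, add_tsub_cancel_left, posB, add_comm]
    rfl

lemma moveC (o j b m : ℕ) :
    CkMove c 1 (pos c o (j + (c + 1)) b m) (pos c (o + 1) j (b + 1) m) := by
  refine Or.inr (Or.inr (Or.inr (Or.inr (Or.inl ⟨?_, ?_⟩))))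
  · show Multiset.replicate (c + 1) (nacci c 1 2) ≤ _
    rw [posJ]
    exact Multiset.le_add_right _ _
  · show _ = _ - Multiset.replicate (c + 1) (nacci c 1 2) + {nacci c 1 3, nacci c 1 1}
    rw [posJ, add_tsub_cancel_left, nacci_one, posB, posO]
    rw [Multiset.insert_eq_cons, ← Multiset.singleton_add]
    simp only [Multiset.replicate_one]
    abel

lemma moveD (o j b m : ℕ) :
    CkMove c 1 (pos c o (j + c) (b + c) m) (pos c o j b (m + 1)) := by
  refine Or.inl ⟨3, by omega, ?_, ?_⟩
  · have hb := blockEq (c := c) 2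
    norm_num at hb ⊢
    rw [hb, posJ, posB]
    calc Multiset.replicate c (nacci c 1 2) + Multiset.replicate c (nacci c 1 3) ≤
        Multiset.replicate c (nacci c 1 2) + (Multiset.replicate c (nacci c 1 3) +
          pos c o j b m) := by rw [← add_assoc]; exact Multiset.le_add_right _ _
      _ = _ := by abel
  · have hb := blockEq (c := c) 2
    norm_num at hb ⊢
    rw [hb, posJ, posB]
    have : Multiset.replicate c (nacci c 1 2) + (Multiset.replicate c (nacci c 1 3) +
        pos c o j b m) = (Multiset.replicate c (nacci c 1 2) +
          Multiset.replicate c (nacci c 1 3)) + pos c o j b m := by abel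
    rw [this, add_tsub_cancel_left, posM, add_comm]
    rfl

lemma moveE (o j b m : ℕ) :
    CkMove c 1 (pos c o j (b + (c + 1)) m) (pos c (o + c) j b (m + 1)) := by
  refine Or.inr (Or.inr (Or.inr (Or.inr (Or.inr ⟨3, by omega, ?_, ?_⟩))))
  · rw [posB]
    exact Multiset.le_add_right _ _
  · rw [posB, add_tsub_cancel_left]
    norm_num
    rw [nacci_one, posM, posO, ← Multiset.singleton_add]
    simp only [Multiset.replicate_one]
    abel

end Moves

/-! ### Master inversion of moves from a `pos` position -/

lemma inversion {c : ℕ} (hc : 1 ≤ c) {o j b m : ℕ} {B : Multiset ℕ}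
    (hm : m ≤ 1) (hmb : 1 ≤ m → b + 1 ≤ c)
    (h : CkMove c 1 (pos c o j b m) B) :
    (∃ o', o = o' + (c + 1) ∧ B = pos c o' (j + 1) b m) ∨
    (∃ o' j', o = o' + c ∧ j = j' + c ∧ B = pos c o' j' (b + 1) m) ∨
    (∃ j', j = j' + (c + 1) ∧ B = pos c (o + 1) j' (b + 1) m) ∨
    (∃ j' b', j = j' + c ∧ b = b' + c ∧ B = pos c o j' b' (m + 1)) ∨
    (∃ b', b = b' + (c + 1) ∧ B = pos c (o + c) j b' (m + 1)) := by
  rcases h with ⟨i, hi, hle, hB⟩ | ⟨i, hi1, hi2, _, _⟩ | ⟨hle, hB⟩ | ⟨i, hi1, hi2, _, _⟩ |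
    ⟨hle, hB⟩ | ⟨i, hi, hle, hB⟩
  · -- type (1)
    obtain ⟨t, rfl⟩ : ∃ t, i = t + 2 := ⟨i - 2, by omega⟩
    have hIcc : t + 2 - 1 = t + 1 := by omega
    rw [hIcc] at hle hB
    have hbl := blockEq (c := c) (t + 1)
    rw [show t + 1 + 1 = t + 2 from rfl] at hbl
    rw [hbl] at hle hB
    have h1 : c ≤ Multiset.count (nacci c 1 (t + 1)) (pos c o j b m) :=
      repl_le_count (le_trans (Multiset.le_add_right _ _) hle)
    have h2 : c ≤ Multiset.count (nacci c 1 (t + 2)) (pos c o j b m) :=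
      repl_le_count (le_trans (Multiset.le_add_left _ _) hle)
    have hs := shape_of_count hc o j b m _ (lt_of_lt_of_le hc h2)
    rcases hs with hx | hx | hx | hx
    · have hx' : nacci c 1 (t + 2) = nacci c 1 1 := by rw [hx, nacci_one]
      have := nacci_inj hc _ _ (by omega) (by omega) hx'
      omega
    · -- t = 0 : the (1, i = 2) move
      have ht : t = 0 := by
        have := nacci_inj hc _ _ (by omega) (by omega) hx
        omega
      subst ht
      simp only [Nat.reduceAdd] at h1 h2 hB
      rw [nacci_one, count_one hc] at h1
      rw [count_two hc] at h2
      obtain ⟨o', rfl⟩ : ∃ o', o = o' + c := ⟨o - c, by omega⟩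
      obtain ⟨j', rfl⟩ : ∃ j', j = j' + c := ⟨j - c, by omega⟩
      refine Or.inr (Or.inl ⟨o', j', rfl, rfl, ?_⟩)
      have hA : pos c (o' + c) (j' + c) b m =
          (Multiset.replicate c (nacci c 1 1) + Multiset.replicate c (nacci c 1 2)) +
            pos c o' j' b m := by
        rw [posO, posJ, nacci_one]
        abel
      rw [hA, add_tsub_cancel_left] at hB
      rw [hB, posB, Multiset.replicate_one]
      exact add_comm _ _
    · -- t = 1 : the (1, i = 3) move
      have ht : t = 1 := by
        have := nacci_inj hc _ _ (by omega) (by omega) hx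
        omega
      subst ht
      simp only [Nat.reduceAdd] at h1 h2 hB
      rw [count_two hc] at h1
      rw [count_three hc] at h2
      obtain ⟨j', rfl⟩ : ∃ j', j = j' + c := ⟨j - c, by omega⟩
      obtain ⟨b', rfl⟩ : ∃ b', b = b' + c := ⟨b - c, by omega⟩
      refine Or.inr (Or.inr (Or.inr (Or.inl ⟨j', b', rfl, rfl, ?_⟩)))
      have hA : pos c o (j' + c) (b' + c) m =
          (Multiset.replicate c (nacci c 1 2) + Multiset.replicate c (nacci c 1 3)) +
            pos c o j' b' m := by
        rw [posJ, posB]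
        abel
      rw [hA, add_tsub_cancel_left] at hB
      rw [hB, posM, Multiset.replicate_one]
      exact add_comm _ _
    · -- t = 2 : impossible
      have ht : t = 2 := by
        have := nacci_inj hc _ _ (by omega) (by omega) hx
        omega
      subst ht
      simp only [Nat.reduceAdd] at h1 h2
      rw [count_three hc] at h1
      rw [count_four hc] at h2
      have := hmb (by omega)
      omega
  · omega
  · -- type (3a)
    rw [nacci_one] at hle hB
    have h1 : c + 1 ≤ Multiset.count 1 (pos c o j b m) := repl_le_count hle
    rw [count_one hc] at h1
    obtain ⟨o', rfl⟩ : ∃ o', o = o' + (c + 1) := ⟨o - (c + 1), by omega⟩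
    refine Or.inl ⟨o', rfl, ?_⟩
    rw [posO (c := c) o' (c + 1)] at hB
    rw [hB, add_tsub_cancel_left, posJ, Multiset.replicate_one]
    exact add_comm _ _
  · omega
  · -- type (3c)
    simp only [Nat.reduceAdd] at hle hB
    have h1 : c + 1 ≤ Multiset.count (nacci c 1 2) (pos c o j b m) := repl_le_count hle
    rw [count_two hc] at h1
    obtain ⟨j', rfl⟩ : ∃ j', j = j' + (c + 1) := ⟨j - (c + 1), by omega⟩
    refine Or.inr (Or.inr (Or.inl ⟨j', rfl, ?_⟩))
    rw [posJ (c := c) o (c + 1)] at hB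
    rw [hB, add_tsub_cancel_left, nacci_one, posB, posO, Multiset.insert_eq_cons,
      ← Multiset.singleton_add, Multiset.replicate_one]
    abel
  · -- type (3d)
    obtain ⟨t, rfl⟩ : ∃ t, i = t + 3 := ⟨i - 3, by omega⟩
    have h1 : c + 1 ≤ Multiset.count (nacci c 1 (t + 3)) (pos c o j b m) := repl_le_count hle
    have hs := shape_of_count hc o j b m (nacci c 1 (t + 3)) (by omega)
    rcases hs with hx | hx | hx | hx
    · have hx' : nacci c 1 (t + 3) = nacci c 1 1 := by rw [hx, nacci_one]
      have := nacci_inj hc _ _ (by omega) (by omega) hx'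
      omega
    · have := nacci_inj hc _ _ (by omega) (by omega) hx
      omega
    · -- t = 0 : the 3d move on S_3
      have ht : t = 0 := by
        have := nacci_inj hc _ _ (by omega) (by omega) hx
        omega
      subst ht
      simp only [Nat.reduceAdd] at h1 hB
      rw [count_three hc] at h1
      obtain ⟨b', rfl⟩ : ∃ b', b = b' + (c + 1) := ⟨b - (c + 1), by omega⟩
      refine Or.inr (Or.inr (Or.inr (Or.inr ⟨b', rfl, ?_⟩)))
      rw [posB (c := c) o (c + 1)] at hB
      rw [hB, add_tsub_cancel_left, nacci_one, posM, posO, Multiset.replicate_one]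
      abel
    · -- t = 1 : impossible
      have ht : t = 1 := by
        have := nacci_inj hc _ _ (by omega) (by omega) hx
        omega
      subst ht
      simp only [Nat.reduceAdd] at h1
      rw [count_four hc] at h1
      omega

/-! ### The strategy-stealing chains -/

section Chains

variable {c : ℕ} (hc : 1 ≤ c)

/-- Forced alternating chain: from a P-position `(j, b)` with plenty of ones,
`(j + 2t, b)` is also a P-position. -/
lemma climb : ∀ (t : ℕ) {j b u : ℕ}, b ≤ c → j + 2 * t ≤ c →
    ¬ Win c hc (pos c (u + t * (2 * (c + 1))) j b 0) →
    ¬ Win c hc (pos c u (j + 2 * t) b 0) := by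
  intro t
  induction t with
  | zero => intro j b u _ _ hP; simpa using hP
  | succ t ih =>
    intro j b u hb hj hP
    have e : u + (t + 1) * (2 * (c + 1)) = u + t * (2 * (c + 1)) + (c + 1) + (c + 1) := by ring
    rw [e] at hP
    have W1 : Win c hc (pos c (u + t * (2 * (c + 1)) + (c + 1)) (j + 1) b 0) :=
      move_win hc hP (moveA _ _ _ _)
    obtain ⟨B, hmove, hnB⟩ := (win_iff hc _).1 W1
    rcases inversion hc (by omega) (by omega) hmove with
      ⟨o', heq, hB⟩ | ⟨o', j', _, heq, _⟩ | ⟨j', heq, _⟩ | ⟨j', b', heq, _, _⟩ | ⟨b', heq, _⟩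
    · have ho : u + t * (2 * (c + 1)) = o' := Nat.add_right_cancel heq
      rw [hB, ← ho] at hnB
      have e2 : j + 2 * (t + 1) = (j + 1 + 1) + 2 * t := by ring
      rw [e2]
      exact ih hb (by omega) hnB
    · omega
    · omega
    · omega
    · omega

/-- The endgame contradiction at position `(c, c)`. -/
lemma endgame (u : ℕ) (hP : ¬ Win c hc (pos c (u + c) c c 0)) : False := by
  -- move to (0, c+1) :
  have mvB : CkMove c 1 (pos c (u + c) c c 0) (pos c u 0 (c + 1) 0) := by
    have := moveB (c := c) u 0 c 0
    simpa using this
  have WB : Win c hc (pos c u 0 (c + 1) 0) := move_win hc hP mvB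
  -- move to (0, 0, S4) :
  have mvD : CkMove c 1 (pos c (u + c) c c 0) (pos c (u + c) 0 0 1) := by
    have := moveD (c := c) (u + c) 0 0 0
    simpa using this
  have WD : Win c hc (pos c (u + c) 0 0 1) := move_win hc hP mvD
  -- invert WD : unique option (1, 0, S4)
  obtain ⟨B, hmv, hnB⟩ := (win_iff hc _).1 WD
  rcases inversion hc (by omega) (by omega) hmv with
    ⟨o', heqD, hB⟩ | ⟨o', j', _, heq, _⟩ | ⟨j', heq, _⟩ | ⟨j', b', heq, _, _⟩ | ⟨b', heq, _⟩
  · rw [hB] at hnB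
    simp only [Nat.zero_add] at hnB
    -- hnB : ¬ Win (pos o' 1 0 1),  heqD : u + c = o' + (c+1)
    -- invert WB
    obtain ⟨B2, hmv2, hnB2⟩ := (win_iff hc _).1 WB
    rcases inversion hc (by omega) (by omega) hmv2 with
      ⟨o2, heqB, hB2⟩ | ⟨o2, j', heq2, heq2', _⟩ | ⟨j', heq2, _⟩ | ⟨j', b', heq2, _, _⟩ |
      ⟨b', heq2, hB2⟩
    · -- case 1 : (1, c+1) is a P-position; move E from it contradicts hnB
      rw [hB2] at hnB2
      simp only [Nat.zero_add] at hnB2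
      -- hnB2 : ¬ Win (pos o2 1 (c+1) 0), heqB : u = o2 + (c+1)
      have mvE : CkMove c 1 (pos c o2 1 (c + 1) 0) (pos c (o2 + c) 1 0 1) := by
        have := moveE (c := c) o2 1 0 0
        simpa using this
      have WE : Win c hc (pos c (o2 + c) 1 0 1) := move_win hc hnB2 mvE
      have ho : o' = o2 + c := by omega
      rw [ho] at hnB
      exact hnB WE
    · omega
    · omega
    · omega
    · -- case 5 : would move (0,c+1) to the very S4 position WD, a Win : contradiction
      have hb0 : b' = 0 := by omega
      rw [hB2, hb0] at hnB2
      simp only [Nat.zero_add] at hnB2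
      exact hnB2 WD
  · omega
  · omega
  · omega
  · omega

/-- One stage of the odd-`c` descent: from a P-position `(1, b)` to a P-position `(1, b+1)`,
consuming exactly `c² + 2c` ones. -/
lemma oddStage (γ : ℕ) (hcg : c = 2 * γ + 1) {b u : ℕ} (hb1 : b + 1 ≤ c)
    (hP : ¬ Win c hc (pos c (u + (c * c + 2 * c)) 1 b 0)) :
    ¬ Win c hc (pos c u 1 (b + 1) 0) := by
  have e : u + (c * c + 2 * c) = (u + (2 * c + 1)) + γ * (2 * (c + 1)) := by
    subst hcg; ring
  rw [e] at hP
  have h1 := climb hc γ (by omega) (by omega) hP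
  rw [show 1 + 2 * γ = c from by omega] at h1
  have mvB : CkMove c 1 (pos c (u + (2 * c + 1)) c b 0) (pos c (u + (c + 1)) 0 (b + 1) 0) := by
    have := moveB (c := c) (u + (c + 1)) 0 b 0
    rw [show u + (c + 1) + c = u + (2 * c + 1) from by ring] at this
    simpa using this
  have W1 : Win c hc (pos c (u + (c + 1)) 0 (b + 1) 0) := move_win hc h1 mvB
  obtain ⟨B, hmv, hnB⟩ := (win_iff hc _).1 W1
  rcases inversion hc (by omega) (by omega) hmv with
    ⟨o', heq, hB⟩ | ⟨o', j', _, heq, _⟩ | ⟨j', heq, _⟩ | ⟨j', b', heq, _, _⟩ | ⟨b', heq, _⟩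
  · have ho : o' = u := by omega
    rw [hB, ho] at hnB
    simpa using hnB
  · omega
  · omega
  · omega
  · omega

/-- The odd-`c` descent loop. -/
lemma oddLoop (γ : ℕ) (hcg : c = 2 * γ + 1) :
    ∀ (β b u : ℕ), b + β = c →
      ¬ Win c hc (pos c (u + (β + 1) * (c * c + 2 * c)) 1 b 0) → False := by
  intro β
  induction β with
  | zero =>
    intro b u hb hP
    have e : u + (0 + 1) * (c * c + 2 * c) = (u + (2 * c + 1)) + γ * (2 * (c + 1)) := by
      subst hcg; ring
    rw [e] at hP
    have h1 := climb hc γ (by omega) (by omega) hP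
    rw [show 1 + 2 * γ = c from by omega, show b = c from by omega] at h1
    rw [show u + (2 * c + 1) = (u + (c + 1)) + c from by ring] at h1
    exact endgame hc _ h1
  | succ β ih =>
    intro b u hb hP
    have e : u + (β + 1 + 1) * (c * c + 2 * c) =
        (u + (β + 1) * (c * c + 2 * c)) + (c * c + 2 * c) := by ring
    rw [e] at hP
    exact ih (b + 1) _ (by omega) (oddStage hc γ hcg (by omega) hP)

/-- Odd case : the starting position is a P-position. -/
lemma oddMain (γ : ℕ) (hcg : c = 2 * γ + 1) (n : ℕ)
    (hn : (c + 1) ^ 3 + (c + 1) ≤ n) : ¬ Win c hc (pos c n 0 0 0) := by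
  intro hW
  obtain ⟨B, hmv, hnB⟩ := (win_iff hc _).1 hW
  rcases inversion hc (by omega) (by omega) hmv with
    ⟨o', heq, hB⟩ | ⟨o', j', _, heq, _⟩ | ⟨j', heq, _⟩ | ⟨j', b', heq, _, _⟩ | ⟨b', heq, _⟩
  · rw [hB] at hnB
    simp only [Nat.zero_add] at hnB
    have key : (c + 1) * (c * c + 2 * c) + (c + 1) = (c + 1) ^ 3 := by ring
    have hle : (c + 1) * (c * c + 2 * c) ≤ o' := by linarith
    obtain ⟨u, rfl⟩ : ∃ u, o' = u + (c + 1) * (c * c + 2 * c) :=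
      ⟨o' - (c + 1) * (c * c + 2 * c), ((Nat.sub_add_cancel hle).symm)⟩
    have : u + (c + 1) * (c * c + 2 * c) = u + (c + 1) * (c * c + 2 * c) := rfl
    refine oddLoop hc γ hcg c 0 u (by omega) ?_
    rw [show (c + 1) = c + 1 from rfl]
    exact hnB
  · omega
  · omega
  · omega
  · omega

/-- Base of the even-`c` descent. -/
lemma evenBase (γ : ℕ) (hcg : c = 2 * γ + 2) (u : ℕ)
    (hP : ¬ Win c hc (pos c (u + (c * c + 2 * c)) 0 c 0)) : False := by
  have e : u + (c * c + 2 * c) = (u + c) + (γ + 1) * (2 * (c + 1)) := by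
    subst hcg; ring
  rw [e] at hP
  have h1 := climb hc (γ + 1) (le_refl c) (by omega) hP
  rw [show 0 + 2 * (γ + 1) = c from by omega] at h1
  exact endgame hc u h1

/-- One stage of the even-`c` descent, consuming exactly `2c² + 4c` ones. -/
lemma evenStage (γ : ℕ) (hcg : c = 2 * γ + 2) {b u : ℕ} (hb : b + 2 ≤ c)
    (hP : ¬ Win c hc (pos c (u + (2 * c * c + 4 * c)) 0 b 0)) :
    ¬ Win c hc (pos c u 0 (b + 2) 0) := by
  have e : u + (2 * c * c + 4 * c) = (u + (c * c + 3 * c)) + (γ + 1) * (2 * (c + 1)) := by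
    subst hcg; ring
  rw [e] at hP
  have h1 := climb hc (γ + 1) (by omega) (by omega) hP
  rw [show 0 + 2 * (γ + 1) = c from by omega] at h1
  -- move B : to (0, b+1)
  have mvB : CkMove c 1 (pos c (u + (c * c + 3 * c)) c b 0)
      (pos c (u + (c * c + 2 * c)) 0 (b + 1) 0) := by
    have := moveB (c := c) (u + (c * c + 2 * c)) 0 b 0
    rw [show u + (c * c + 2 * c) + c = u + (c * c + 3 * c) from by ring] at this
    simpa using this
  have W1 : Win c hc (pos c (u + (c * c + 2 * c)) 0 (b + 1) 0) := move_win hc h1 mvB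
  obtain ⟨B, hmv, hnB⟩ := (win_iff hc _).1 W1
  rcases inversion hc (by omega) (by omega) hmv with
    ⟨o', heq, hB⟩ | ⟨o', j', _, heq, _⟩ | ⟨j', heq, _⟩ | ⟨j', b', heq, _, _⟩ | ⟨b', heq, _⟩
  · -- the unique continuation (1, b+1)
    rw [hB] at hnB
    simp only [Nat.zero_add] at hnB
    have e4 : o' = (u + (2 * c + 1)) + γ * (2 * (c + 1)) := by
      have e5 : (u + (2 * c + 1)) + γ * (2 * (c + 1)) + (c + 1) = u + (c * c + 2 * c) := by
        subst hcg; ring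
      omega
    rw [e4] at hnB
    have h2 := climb hc γ (by omega) (by omega) hnB
    -- h2 : ¬ Win (pos (u + 2c+1) (1 + 2γ) (b+1) 0)
    have mvA : CkMove c 1 (pos c (u + (2 * c + 1)) (1 + 2 * γ) (b + 1) 0)
        (pos c (u + c) c (b + 1) 0) := by
      have := moveA (c := c) (u + c) (1 + 2 * γ) (b + 1) 0
      rw [show u + c + (c + 1) = u + (2 * c + 1) from by ring,
        show 1 + 2 * γ + 1 = c from by omega] at this
      exact this
    have W2 : Win c hc (pos c (u + c) c (b + 1) 0) := move_win hc h2 mvA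
    obtain ⟨B2, hmv2, hnB2⟩ := (win_iff hc _).1 W2
    rcases inversion hc (by omega) (by omega) hmv2 with
      ⟨oA, heqA, hB2⟩ | ⟨oB, j', heqB, heqj, hB2⟩ | ⟨j', heq2, _⟩ | ⟨j', b', heq2, _, _⟩ |
      ⟨b', heq2, _⟩
    · -- Case A : (c+1, b+1) is a P-position; contradiction via moves C and B
      rw [hB2] at hnB2
      have mvC : CkMove c 1 (pos c oA (c + 1) (b + 1) 0) (pos c (oA + 1) 0 (b + 2) 0) := by
        have := moveC (c := c) oA 0 (b + 1) 0
        simpa using this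
      have WC : Win c hc (pos c (oA + 1) 0 (b + 2) 0) := move_win hc (by
        simpa using hnB2) mvC
      obtain ⟨B3, hmv3, hnB3⟩ := (win_iff hc _).1 WC
      rcases inversion hc (by omega) (by omega) hmv3 with
        ⟨w, heqw, hB3⟩ | ⟨o', j', _, heq3, _⟩ | ⟨j', heq3, _⟩ | ⟨j', b', heq3, _, _⟩ |
        ⟨b', heq3, _⟩
      · rw [hB3] at hnB3
        simp only [Nat.zero_add] at hnB3
        -- hnB3 : ¬ Win (pos w 1 (b+2) 0), with oA + 1 = w + (c+1), so oA = w + c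
        have mvB2 : CkMove c 1 (pos c oA (c + 1) (b + 1) 0) (pos c w 1 (b + 2) 0) := by
          have := moveB (c := c) w 1 (b + 1) 0
          rw [show w + c = oA from by omega, show 1 + c = c + 1 from by ring] at this
          exact this
        exact absurd (move_win hc (by simpa using hnB2) mvB2) hnB3
      · omega
      · omega
      · omega
      · omega
    · -- Case B : recursion position (0, b+2)
      have hj0 : j' = 0 := by omega
      have hoB : oB = u := by omega
      rw [hB2, hj0, hoB] at hnB2
      exact hnB2
    · omega
    · omega
    · omega
  · omega
  · omega
  · omega
  · omega

/-- The even-`c` descent loop. -/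
lemma evenLoop (γ : ℕ) (hcg : c = 2 * γ + 2) :
    ∀ (δ b u : ℕ), b + 2 * δ = c →
      ¬ Win c hc (pos c (u + δ * (2 * c * c + 4 * c) + (c * c + 2 * c)) 0 b 0) → False := by
  intro δ
  induction δ with
  | zero =>
    intro b u hb hP
    rw [show u + 0 * (2 * c * c + 4 * c) + (c * c + 2 * c) = u + (c * c + 2 * c) from by ring,
      show b = c from by omega] at hP
    exact evenBase hc γ hcg u hP
  | succ δ ih =>
    intro b u hb hP
    rw [show u + (δ + 1) * (2 * c * c + 4 * c) + (c * c + 2 * c) =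
        (u + δ * (2 * c * c + 4 * c) + (c * c + 2 * c)) + (2 * c * c + 4 * c) from by ring]
      at hP
    exact ih (b + 2) u (by omega) (evenStage hc γ hcg (by omega) hP)

/-- Even case : the starting position is an N-position. -/
lemma evenMain (γ : ℕ) (hcg : c = 2 * γ + 2) (n : ℕ)
    (hn : (c + 1) ^ 3 + (c + 1) ≤ n) : Win c hc (pos c n 0 0 0) := by
  by_contra hP
  have key : (c + 1) ^ 3 + (c + 1) =
      ((γ + 1) * (2 * c * c + 4 * c) + (c * c + 2 * c)) + (2 * c + 2) := by
    subst hcg; ring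
  have hle : (γ + 1) * (2 * c * c + 4 * c) + (c * c + 2 * c) ≤ n := by linarith
  obtain ⟨u, hu⟩ : ∃ u, n = u + (γ + 1) * (2 * c * c + 4 * c) + (c * c + 2 * c) :=
    ⟨n - ((γ + 1) * (2 * c * c + 4 * c) + (c * c + 2 * c)), by omega⟩
  rw [hu] at hP
  exact evenLoop hc γ hcg (γ + 1) 0 u (by omega) hP
end Chains

lemma start_eq (c n : ℕ) : Multiset.replicate n 1 = pos c n 0 0 0 := by
  simp [pos]

end TPZ

/-- In the two-player `(c,1)`-nacci Zeckendorf game on `n`, for every `c ≥ 1` and every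
`n ≥ (c+1)³ + (c+1)`: if `c` is odd then Player 2 has a winning strategy, and if `c` is
even then Player 1 has a winning strategy. -/
theorem two_player_c1_nacci_winner (c n : ℕ) (hc : 1 ≤ c)
    (hn : (c + 1) ^ 3 + (c + 1) ≤ n) :
    (Odd c → PlayerWins (CkMove c 1) 2 2 n) ∧ (Even c → PlayerWins (CkMove c 1) 2 1 n) := by
  have hpow : c + 1 ≤ (c + 1) ^ 3 := Nat.le_self_pow (by omega) _
  have hcn : c + 1 ≤ n := by linarith
  have hstart : Multiset.replicate n 1 = TPZ.pos c n 0 0 0 := TPZ.start_eq c n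
  have hex : ∃ B, CkMove c 1 (Multiset.replicate n 1) B := by
    obtain ⟨n', rfl⟩ : ∃ n', n = n' + (c + 1) := ⟨n - (c + 1), (Nat.sub_add_cancel hcn).symm⟩
    rw [hstart]
    exact ⟨_, TPZ.moveA n' 0 0 0⟩
  constructor
  · intro hodd
    obtain ⟨γ, hγ⟩ := hodd
    have hNW : ¬ TPZ.Win c hc (TPZ.pos c n 0 0 0) := TPZ.oddMain hc γ (by omega) n hn
    rw [← hstart] at hNW
    exact (TPZ.bridge hc (Multiset.replicate n 1) 0 2).2 (by omega) (by omega) (by omega)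
      hNW hex
  · intro heven
    obtain ⟨k, hk⟩ := heven
    have hW : TPZ.Win c hc (TPZ.pos c n 0 0 0) := TPZ.evenMain hc (k - 1) (by omega) n hn
    rw [← hstart] at hW
    exact (TPZ.bridge hc (Multiset.replicate n 1) 0 1).1 (by omega) hW
end

section
/- Let p >= 3 and suppose Player m (1 <= m <= p) has a winning strategy in the p-player (c,k)-nacci Zeckendorf game on n. If Player m is not the player who makes the (c+1)-st of the following c+2 consecutive moves, then no play consistent with a winning strategy of Player m contains these c+2 consecutive moves: c+1 consecutive moves each replacing c+1 copies of S_1 by S_2, followed by the move replacing c+1 copies of S_2 by S_3 and S_1 (if k = 1) or by S_3 (if k > 1). -/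
/-- `Consistent σ p m xs`: in the sequence of positions `xs`, whenever it is
player `m`'s turn (the `t`-th move, `t % p + 1 = m`), the next position is the
one prescribed by the strategy `σ` (a function of the move number and the
current position). -/
def Consistent (σ : ℕ → Multiset ℕ → Multiset ℕ) (p m : ℕ) (xs : List (Multiset ℕ)) : Prop :=
  ∀ t, t + 1 < xs.length → t % p + 1 = m →
    xs.getD (t + 1) 0 = σ t (xs.getD t 0)

/-- A (possibly partial) play of the game from the position `start`:
a nonempty sequence of positions beginning at `start` in which every
consecutive pair is related by a legal move. -/
def IsPlay (Move : Multiset ℕ → Multiset ℕ → Prop) (start : Multiset ℕ)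
    (xs : List (Multiset ℕ)) : Prop :=
  xs.head? = some start ∧ xs.Chain' Move

/-- A complete play of the game from `start`: a play whose last position is terminal. -/
def IsCompletePlay (Move : Multiset ℕ → Multiset ℕ → Prop) (start : Multiset ℕ)
    (xs : List (Multiset ℕ)) : Prop :=
  IsPlay Move start xs ∧ ∃ y, xs.getLast? = some y ∧ Terminal Move y

/-- `σ` is a winning strategy for player `m` in the `p`-player game from `start`:
along every play consistent with `σ`, whenever it is `m`'s turn and a legal move exists,
`σ` prescribes a legal move; and every complete play consistent with `σ` ends with a
move by player `m` (a play `x₀, …, x_L` has `L = xs.length - 1` moves, the last being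
move number `xs.length - 2`, made by player `(xs.length - 2) % p + 1`). -/
def IsWinningStrategy (Move : Multiset ℕ → Multiset ℕ → Prop) (p m : ℕ)
    (start : Multiset ℕ) (σ : ℕ → Multiset ℕ → Multiset ℕ) : Prop :=
  (∀ xs, IsPlay Move start xs → Consistent σ p m xs →
    ∀ y, xs.getLast? = some y → (xs.length - 1) % p + 1 = m → (∃ B, Move y B) →
      Move y (σ (xs.length - 1) y)) ∧
  (∀ xs, IsCompletePlay Move start xs → Consistent σ p m xs →
    (xs.length - 2) % p + 1 = m)

/-!
If the opponent making move `t + c` combined it with the following move, the game would reach the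
same position one move earlier. Every move preserves the sum of the parts and increases the sum of
their squares, so the game terminates, and since `p ≥ 2` the two plays reaching that position can
be completed by the same moves while staying consistent with `σ`: whenever it is `m`'s turn in one
of them, it is not in the other. The two completions then end on consecutive move numbers, so
`m` cannot make the last move in both, contradicting that `σ` is winning.
-/

lemma List.getD_length_sub_one_of_getLast?_eq {α : Type*} {l : List α} {y d : α}
    (h : l.getLast? = some y) : l.getD (l.length - 1) d = y := by
  rw [List.getLast?_eq_getElem?] at h
  rw [List.getD_eq_getElem?_getD, h, Option.getD_some]

lemma List.getLast?_take_succ {α : Type*} {l : List α} {i : ℕ} (h : i < l.length) (d : α) :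
    (l.take (i + 1)).getLast? = some (l.getD i d) := by
  rw [List.getLast?_take, if_neg (Nat.succ_ne_zero i), Nat.add_sub_cancel,
    List.getElem?_eq_getElem h, Option.some_or, List.getD_eq_getElem _ _ h]

lemma Nat.add_one_mod_ne {u p : ℕ} (hp : 2 ≤ p) : (u + 1) % p ≠ u % p := by
  have := Nat.mod_lt u (by omega : 0 < p)
  rw [Nat.add_mod_eq_ite, Nat.one_mod_eq_one.2 (by omega)]
  split_ifs <;> omega

lemma Multiset.exists_eq_of_replicate_le_sub_add {α : Type*} [DecidableEq α] {a b : α} {n : ℕ}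
    {P : Multiset α} (hP : replicate (n + 1) a ≤ P)
    (hQ : replicate (n + 1) b ≤ P - replicate (n + 1) a + {b}) :
    ∃ D, P = replicate (n + 1) a + replicate n b + D ∧
      P - replicate (n + 1) a + {b} - replicate (n + 1) b = D := by
  obtain ⟨P', rfl⟩ := le_iff_exists_add.1 hP
  rw [add_tsub_cancel_left, add_comm _ ({b} : Multiset α), singleton_add, replicate_succ,
    cons_le_cons_iff] at hQ
  obtain ⟨D, rfl⟩ := le_iff_exists_add.1 hQ
  refine ⟨D, by rw [add_assoc], ?_⟩
  rw [add_tsub_cancel_left, replicate_succ, add_comm _ ({b} : Multiset α), singleton_add,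
    ← cons_add, add_tsub_cancel_left]

section Plays

variable {Move : Multiset ℕ → Multiset ℕ → Prop} {start y Y : Multiset ℕ}
  {xs ys zs : List (Multiset ℕ)} {σ : ℕ → Multiset ℕ → Multiset ℕ} {p m : ℕ}

lemma IsPlay.take (h : IsPlay Move start xs) (n : ℕ) : IsPlay Move start (xs.take (n + 1)) := by
  obtain ⟨hhead, hchain⟩ := h
  cases xs with
  | nil => simp at hhead
  | cons a l => exact ⟨by simpa using hhead, hchain.take _⟩

lemma IsPlay.append_singleton (h : IsPlay Move start xs) (hlast : xs.getLast? = some y)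
    (hmove : Move y Y) : IsPlay Move start (xs ++ [Y]) := by
  obtain ⟨hhead, hchain⟩ := h
  refine ⟨?_, hchain.append (List.isChain_singleton Y) ?_⟩
  · cases xs with
    | nil => simp at hlast
    | cons a l => simpa using hhead
  · simp [hlast, hmove]

lemma Consistent.take (h : Consistent σ p m xs) (n : ℕ) : Consistent σ p m (xs.take n) := by
  intro t ht hm
  simp only [List.length_take] at ht
  simp only [List.getD_eq_getElem?_getD, List.getElem?_take, if_pos (show t < n by omega),
    if_pos (show t + 1 < n by omega)]
  simpa only [List.getD_eq_getElem?_getD] using h t (by omega) hm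

lemma Consistent.append_singleton (h : Consistent σ p m xs) (hlast : xs.getLast? = some y)
    (hY : (xs.length - 1) % p + 1 = m → Y = σ (xs.length - 1) y) :
    Consistent σ p m (xs ++ [Y]) := by
  have hpos : 0 < xs.length := List.length_pos_iff.2 (by rintro rfl; simp at hlast)
  intro t ht hm
  rw [List.length_append, List.length_singleton] at ht
  rw [List.getD_append _ _ _ t (by omega)]
  rcases Nat.lt_or_ge (t + 1) xs.length with hlt | hge
  · rw [List.getD_append _ _ _ _ hlt]
    exact h t hlt hm
  · obtain rfl : t = xs.length - 1 := by omega
    rw [Nat.sub_add_cancel hpos, List.getD_append_right _ _ _ _ le_rfl, Nat.sub_self,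
      List.getD_cons_zero, List.getD_length_sub_one_of_getLast?_eq hlast]
    exact hY hm

lemma IsWinningStrategy.exists_common_completion (hσ : IsWinningStrategy Move p m start σ)
    (hwf : WellFounded (flip Move)) (hp : 2 ≤ p) (R : Multiset ℕ) :
    ∀ ys zs, IsPlay Move start ys → Consistent σ p m ys → ys.getLast? = some R →
      IsPlay Move start zs → Consistent σ p m zs → zs.getLast? = some R →
      zs.length = ys.length + 1 →
      ∃ L, IsCompletePlay Move start (ys ++ L) ∧ Consistent σ p m (ys ++ L) ∧
        IsCompletePlay Move start (zs ++ L) ∧ Consistent σ p m (zs ++ L) := by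
  induction R using hwf.induction with
  | _ R ih =>
    intro ys zs hys hysc hysR hzs hzsc hzsR hlen
    by_cases hterm : ∃ B, Move R B
    · have hpos : 0 < ys.length := List.length_pos_iff.2 (by rintro rfl; simp at hysR)
      set u := ys.length - 1
      have hzu : zs.length - 1 = u + 1 := by omega
      obtain ⟨Y, hmove, hYy, hYz⟩ : ∃ Y, Move R Y ∧ (u % p + 1 = m → Y = σ u R) ∧
          ((u + 1) % p + 1 = m → Y = σ (u + 1) R) := by
        by_cases hy : u % p + 1 = m
        · refine ⟨σ u R, hσ.1 ys hys hysc R hysR hy hterm, fun _ ↦ rfl, fun hz ↦ ?_⟩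
          exact absurd (by omega) (Nat.add_one_mod_ne (u := u) hp)
        by_cases hz : (u + 1) % p + 1 = m
        · refine ⟨σ (u + 1) R, ?_, fun h ↦ absurd h hy, fun _ ↦ rfl⟩
          simpa only [hzu] using hσ.1 zs hzs hzsc R hzsR (by rwa [hzu]) hterm
        · exact ⟨hterm.choose, hterm.choose_spec, fun h ↦ absurd h hy, fun h ↦ absurd h hz⟩
      obtain ⟨L, hyL, hyLc, hzL, hzLc⟩ := ih Y hmove (ys ++ [Y]) (zs ++ [Y])
        (hys.append_singleton hysR hmove) (hysc.append_singleton hysR hYy) (by simp)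
        (hzs.append_singleton hzsR hmove) (hzsc.append_singleton hzsR (by rwa [hzu]))
        (by simp) (by simp [hlen])
      simp only [List.append_assoc, List.singleton_append] at hyL hyLc hzL hzLc
      exact ⟨Y :: L, hyL, hyLc, hzL, hzLc⟩
    · have hcomplete {xs} (h : IsPlay Move start xs) (hR : xs.getLast? = some R) :
          IsCompletePlay Move start (xs ++ []) :=
        ⟨by simpa using h, R, by simpa using hR, fun B hB ↦ hterm ⟨B, hB⟩⟩
      exact ⟨[], hcomplete hys hysR, by simpa using hysc, hcomplete hzs hzsR,
        by simpa using hzsc⟩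

lemma IsWinningStrategy.getLast?_ne_of_length_eq_succ (hσ : IsWinningStrategy Move p m start σ)
    (hwf : WellFounded (flip Move)) (hp : 2 ≤ p) (hys : IsPlay Move start ys)
    (hysc : Consistent σ p m ys) (hzs : IsPlay Move start zs) (hzsc : Consistent σ p m zs)
    (hlen : zs.length = ys.length + 1)
    -- `IsWinningStrategy` names the last mover `(length - 2) % p + 1`, junk for a play of length 1
    (hys2 : 2 ≤ ys.length) :
    ys.getLast? ≠ zs.getLast? := by
  intro hlast
  obtain ⟨R, hR⟩ := Option.ne_none_iff_exists'.1
    (List.getLast?_eq_none_iff.not.2 (List.ne_nil_of_length_pos (show 0 < ys.length by omega)))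
  obtain ⟨L, hyL, hyLc, hzL, hzLc⟩ :=
    hσ.exists_common_completion hwf hp R ys zs hys hysc hR hzs hzsc (hlast ▸ hR) hlen
  have hy := hσ.2 _ hyL hyLc
  have hz := hσ.2 _ hzL hzLc
  rw [List.length_append] at hy
  rw [List.length_append, hlen, show ys.length + 1 + L.length - 2 = ys.length + L.length - 2 + 1
    by omega] at hz
  exact Nat.add_one_mod_ne (u := ys.length + L.length - 2) hp (by omega)

end Plays

namespace CkNacci

def sqSum (A : Multiset ℕ) : ℕ := (A.map (· ^ 2)).sum

def potential (A : Multiset ℕ) : ℕ := A.sum ^ 2 - sqSum A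

@[simp] lemma sqSum_add (A B : Multiset ℕ) : sqSum (A + B) = sqSum A + sqSum B := by
  simp [sqSum]

@[simp] lemma sqSum_cons (a : ℕ) (A : Multiset ℕ) : sqSum (a ::ₘ A) = a ^ 2 + sqSum A := by
  simp [sqSum]

@[simp] lemma sqSum_singleton (a : ℕ) : sqSum {a} = a ^ 2 := by
  simp [sqSum]

@[simp] lemma sqSum_replicate (n a : ℕ) : sqSum (Multiset.replicate n a) = n * a ^ 2 := by
  simp [sqSum]

lemma sqSum_le_sq_sum (A : Multiset ℕ) : sqSum A ≤ A.sum ^ 2 := by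
  induction A using Multiset.induction_on with
  | empty => simp [sqSum]
  | cons a A ih =>
    rw [sqSum_cons, Multiset.sum_cons]
    nlinarith [Nat.zero_le (a * A.sum)]

lemma sqSum_lt_sq_sum {A : Multiset ℕ} (hpos : ∀ x ∈ A, 0 < x)
    (hcard : 2 ≤ Multiset.card A) : sqSum A < A.sum ^ 2 := by
  obtain ⟨a, ha⟩ := Multiset.card_pos_iff_exists_mem.1 (by omega : 0 < Multiset.card A)
  obtain ⟨B, rfl⟩ := Multiset.exists_cons_of_mem ha
  obtain ⟨b, hb⟩ :=
    Multiset.card_pos_iff_exists_mem.1 (show 0 < Multiset.card B by simp at hcard; omega)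
  have h_a := hpos a (Multiset.mem_cons_self a B)
  have h_b := hpos b (Multiset.mem_cons_of_mem hb)
  have h_bB := Multiset.le_sum_of_mem hb
  have h_B := sqSum_le_sq_sum B
  rw [sqSum_cons, Multiset.sum_cons]
  nlinarith

lemma potential_lt_of_replace {A X Y : Multiset ℕ} (hle : X ≤ A) (hsum : X.sum = Y.sum)
    (hsq : sqSum X < sqSum Y) : potential (A - X + Y) < potential A := by
  obtain ⟨D, rfl⟩ := Multiset.le_iff_exists_add.1 hle
  have h_sum : (D + Y).sum = (X + D).sum := by simp [hsum, add_comm]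
  have h_bound := sqSum_le_sq_sum (D + Y)
  rw [add_tsub_cancel_left, potential, potential, h_sum] at *
  rw [sqSum_add, sqSum_add] at *
  omega

lemma potential_merge_lt {A X : Multiset ℕ} (hle : X ≤ A) (hpos : ∀ x ∈ X, 0 < x)
    (hcard : 2 ≤ Multiset.card X) : potential (A - X + {X.sum}) < potential A :=
  potential_lt_of_replace hle (Multiset.sum_singleton _).symm <| by
    rw [sqSum_singleton]; exact sqSum_lt_sq_sum hpos hcard

lemma potential_merge_replicate_lt {A : Multiset ℕ} {a b c : ℕ} (hc : 1 ≤ c) (ha : 0 < a)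
    (hb : b = (c + 1) * a) (hle : Multiset.replicate (c + 1) a ≤ A) :
    potential (A - Multiset.replicate (c + 1) a + {b}) < potential A := by
  have h_sum : (Multiset.replicate (c + 1) a).sum = b := by
    rw [Multiset.sum_replicate, smul_eq_mul, hb]
  rw [← h_sum]
  exact potential_merge_lt hle (fun x hx ↦ Multiset.eq_of_mem_replicate hx ▸ ha) (by simpa)

lemma sq_lt_of_split {a b c d s : ℕ} (hc : 1 ≤ c) (hd : d ≤ c) (hs : s < a)
    (h : b + d * s = (c + 1) * a) : (c + 1) * a ^ 2 < b ^ 2 + d * s ^ 2 := by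
  obtain ⟨e, rfl⟩ := Nat.exists_eq_add_of_lt hs
  obtain ⟨g, rfl⟩ := Nat.exists_eq_add_of_le hd
  have hb : b = (g + 1) * s + (d + g + 1) * (e + 1) := by linarith
  have h_expand : ((g + 1) * s + (d + g + 1) * (e + 1)) ^ 2 + d * s ^ 2 =
      (d + g + 1) * (s + e + 1) ^ 2 + (g ^ 2 + g) * s ^ 2 + 2 * g * (d + g + 1) * s * (e + 1) +
        (d + g + 1) * (d + g) * (e + 1) ^ 2 := by ring
  have h_pos : 0 < (d + g + 1) * (d + g) * (e + 1) ^ 2 := by positivity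
  rw [hb, h_expand]
  omega

lemma potential_split_lt {A : Multiset ℕ} {a b c d s : ℕ} (hc : 1 ≤ c) (hd : d ≤ c)
    (hs : s < a) (h : b + d * s = (c + 1) * a) (hle : Multiset.replicate (c + 1) a ≤ A) :
    potential (A - Multiset.replicate (c + 1) a + ({b} + Multiset.replicate d s)) <
      potential A :=
  potential_lt_of_replace hle
    (by simp only [Multiset.sum_replicate, Multiset.sum_add, Multiset.sum_singleton, smul_eq_mul,
      h])
    (by simp only [sqSum_replicate, sqSum_add, sqSum_singleton]; exact sq_lt_of_split hc hd hs h)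

variable {c k : ℕ}

lemma nacci_one : nacci c k 1 = 1 := by
  rw [nacci]

lemma nacci_eq_of_le_succ {i : ℕ} (h1 : 1 ≤ i) (h2 : i ≤ k + 1) :
    nacci c k i = c * ∑ j ∈ Finset.Ico 1 i, nacci c k j + 1 := by
  obtain _ | _ | i := i
  · omega
  · simp [nacci_one]
  · rw [nacci, if_pos (by omega), Finset.sum_attach (Finset.range (i + 1)) (nacci c k <| · + 1),
      Finset.sum_Ico_eq_sum_range, show i + 2 - 1 = i + 1 by omega]
    simp only [add_comm 1]

lemma nacci_succ_of_lt {i : ℕ} (h : k < i) :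
    nacci c k (i + 1) = c * ∑ j ∈ Finset.Icc (i - k) i, nacci c k j := by
  obtain _ | i := i
  · omega
  · rw [nacci, if_neg (by omega), Finset.sum_attach]

lemma nacci_succ_of_le {i : ℕ} (h1 : 1 ≤ i) (h2 : i ≤ k) :
    nacci c k (i + 1) = (c + 1) * nacci c k i := by
  rw [nacci_eq_of_le_succ (by omega) (by omega), Finset.sum_Ico_succ_top h1,
    nacci_eq_of_le_succ h1 (by omega)]
  ring

lemma nacci_pos (hc : 1 ≤ c) {i : ℕ} (hi : 1 ≤ i) : 0 < nacci c k i := by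
  induction i using Nat.strong_induction_on with
  | _ i ih =>
    obtain _ | _ | i := i
    · omega
    · simp [nacci_one]
    · by_cases hik : i + 1 ≤ k
      · rw [nacci_succ_of_le (by omega) hik]
        exact Nat.mul_pos (by omega) (ih _ (by omega) (by omega))
      · rw [nacci_succ_of_lt (by omega)]
        exact Nat.mul_pos hc <| Finset.sum_pos' (fun _ _ ↦ Nat.zero_le _)
          ⟨i + 1, Finset.mem_Icc.2 ⟨by omega, le_rfl⟩, ih _ (by omega) (by omega)⟩

lemma nacci_lt_succ (hc : 1 ≤ c) (hk : 1 ≤ k) {i : ℕ} (hi : 1 ≤ i) :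
    nacci c k i < nacci c k (i + 1) := by
  have hpos := nacci_pos (k := k) hc hi
  by_cases hik : i ≤ k
  · rw [nacci_succ_of_le hi hik]
    nlinarith
  · rw [nacci_succ_of_lt (by omega), ← Finset.add_sum_Ioc_eq_sum_Icc (by omega)]
    have h_le := Finset.single_le_sum (f := nacci c k) (fun _ _ ↦ Nat.zero_le _)
      (Finset.mem_Ioc.2 ⟨by omega, le_rfl⟩ : i ∈ Finset.Ioc (i - k) i)
    have h_low := nacci_pos (k := k) hc (show 1 ≤ i - k by omega)
    nlinarith

lemma nacci_lt_nacci (hc : 1 ≤ c) (hk : 1 ≤ k) {a b : ℕ} (ha : 1 ≤ a) (hab : a < b) :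
    nacci c k a < nacci c k b :=
  Nat.rel_of_forall_rel_succ_of_le_of_lt (f := nacci c k) (· < ·)
    (fun _ hn ↦ nacci_lt_succ hc hk hn) ha hab

lemma nacciBlock_singleton (j : ℕ) : nacciBlock c k {j} = Multiset.replicate c (nacci c k j) := by
  simp [nacciBlock]

lemma nacciBlock_insert {j : ℕ} {s : Finset ℕ} (hj : j ∉ s) :
    nacciBlock c k (insert j s) = Multiset.replicate c (nacci c k j) + nacciBlock c k s := by
  simp [nacciBlock, Finset.insert_val_of_notMem hj]

lemma sum_nacciBlock (s : Finset ℕ) :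
    (nacciBlock c k s).sum = c * ∑ j ∈ s, nacci c k j := by
  rw [nacciBlock, Multiset.sum_bind, Finset.mul_sum]
  simp only [Multiset.sum_replicate, smul_eq_mul]
  rfl

lemma card_nacciBlock (s : Finset ℕ) : Multiset.card (nacciBlock c k s) = c * s.card := by
  simp [nacciBlock, Multiset.card_bind, mul_comm]

lemma pos_of_mem_nacciBlock (hc : 1 ≤ c) {s : Finset ℕ} (hs : ∀ j ∈ s, 1 ≤ j) :
    ∀ x ∈ nacciBlock c k s, 0 < x := by
  intro x hx
  obtain ⟨j, hj, hxj⟩ := Multiset.mem_bind.1 hx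
  rw [Multiset.eq_of_mem_replicate hxj]
  exact nacci_pos hc (hs j hj)

lemma sum_nacciBlock_window {i : ℕ} (h : k < i) :
    (nacciBlock c k (Finset.Icc (i - k) i)).sum = nacci c k (i + 1) := by
  rw [sum_nacciBlock, nacci_succ_of_lt h]

lemma sum_replicate_add_nacciBlock {i : ℕ} (h2 : 2 ≤ i) (hk : i ≤ k) :
    (Multiset.replicate (c + 1) (nacci c k 1) + nacciBlock c k (Finset.Icc 2 i)).sum =
      nacci c k (i + 1) := by
  rw [nacci_eq_of_le_succ (i := i + 1) (by omega) (by omega), Finset.Ico_add_one_right_eq_Icc,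
    ← Finset.add_sum_Ioc_eq_sum_Icc (by omega), ← Finset.Icc_add_one_left_eq_Ioc]
  simp [sum_nacciBlock, nacci_one]
  ring

lemma succ_mul_nacci_succ (hk : 1 ≤ k) :
    (c + 1) * nacci c k (k + 1) = nacci c k (k + 2) + 1 := by
  rw [nacci_succ_of_lt (i := k + 1) (by omega), show k + 1 - k = 1 by omega,
    ← Finset.Ico_add_one_right_eq_Icc, Finset.sum_Ico_succ_top (by omega),
    nacci_eq_of_le_succ (i := k + 1) (by omega) le_rfl]
  ring

lemma succ_mul_nacci_of_lt {i : ℕ} (h : k + 1 < i) :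
    (c + 1) * nacci c k i = nacci c k (i + 1) + c * nacci c k (i - k - 1) := by
  obtain ⟨i, rfl⟩ : ∃ j, i = j + 1 := ⟨i - 1, by omega⟩
  have h_cur : nacci c k (i + 1) =
      c * (nacci c k (i - k) + ∑ j ∈ Finset.Ioc (i - k) i, nacci c k j) := by
    rw [nacci_succ_of_lt (by omega), Finset.add_sum_Ioc_eq_sum_Icc (by omega)]
  have h_next : nacci c k (i + 1 + 1) =
      c * (∑ j ∈ Finset.Ioc (i - k) i, nacci c k j + nacci c k (i + 1)) := by
    rw [nacci_succ_of_lt (by omega), ← Finset.sum_Ioc_succ_top (by omega),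
      show i + 1 - k = i - k + 1 by omega, Finset.Icc_add_one_left_eq_Ioc]
  rw [h_next, show i + 1 - k - 1 = i - k by omega]
  linarith

lemma potential_lt_of_ckMove (hc : 1 ≤ c) (hk : 1 ≤ k) {A B : Multiset ℕ}
    (h : CkMove c k A B) : potential B < potential A := by
  rcases h with ⟨i, hi, hle, rfl⟩ | ⟨i, hi, hik, hle, rfl⟩ | ⟨hle, rfl⟩ |
    ⟨i, hi, hik, hle, rfl⟩ | ⟨hle, rfl⟩ | ⟨i, hi, hle, rfl⟩
  · rw [← sum_nacciBlock_window hi]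
    refine potential_merge_lt hle (pos_of_mem_nacciBlock hc fun j hj ↦ ?_) ?_
    · have := (Finset.mem_Icc.1 hj).1
      omega
    · rw [card_nacciBlock, Nat.card_Icc, show i + 1 - (i - k) = k + 1 by omega]
      nlinarith
  · rw [← sum_replicate_add_nacciBlock hi hik]
    refine potential_merge_lt hle (fun x hx ↦ ?_) (by simp; omega)
    rcases Multiset.mem_add.1 hx with hx | hx
    · exact Multiset.eq_of_mem_replicate hx ▸ nacci_pos hc le_rfl
    · exact pos_of_mem_nacciBlock hc (fun j hj ↦ by linarith [(Finset.mem_Icc.1 hj).1]) x hx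
  · exact potential_merge_replicate_lt hc (nacci_pos hc le_rfl) (nacci_succ_of_le le_rfl hk) hle
  · exact potential_merge_replicate_lt hc (nacci_pos hc (by omega)) (nacci_succ_of_le (by omega)
      (by omega)) hle
  · have := potential_split_lt (b := nacci c k (k + 2)) (d := 1) hc hc
      (nacci_lt_nacci hc hk le_rfl (show 1 < k + 1 by omega))
      (by rw [nacci_one, mul_one, succ_mul_nacci_succ hk]) hle
    rwa [Multiset.replicate_one, Multiset.singleton_add] at this
  · exact potential_split_lt hc le_rfl (nacci_lt_nacci hc hk (by omega) (by omega))
      (succ_mul_nacci_of_lt hi).symm hle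

lemma wellFounded_flip_ckMove (hc : 1 ≤ c) (hk : 1 ≤ k) : WellFounded (flip (CkMove c k)) :=
  Subrelation.wf (fun h ↦ potential_lt_of_ckMove hc hk h) (measure potential).wf

-- The first move supplies the `(c+1)`-st copy of `S₂` that the second one consumes, so `P` itself
-- holds the `c` copies of `S₂` required by the combined move.
lemma ckMove_of_two_moves (hk : 1 ≤ k) {P R : Multiset ℕ}
    (hP : Multiset.replicate (c + 1) (nacci c k 1) ≤ P)
    (hQ : Multiset.replicate (c + 1) (nacci c k 2) ≤
      P - Multiset.replicate (c + 1) (nacci c k 1) + {nacci c k 2})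
    (hR : R = P - Multiset.replicate (c + 1) (nacci c k 1) + {nacci c k 2} -
      Multiset.replicate (c + 1) (nacci c k 2) +
        (if k = 1 then ({nacci c k 3, nacci c k 1} : Multiset ℕ) else {nacci c k 3})) :
    CkMove c k P R := by
  obtain ⟨D, rfl, hD⟩ := Multiset.exists_eq_of_replicate_le_sub_add hP hQ
  rw [hD] at hR
  subst hR
  rcases eq_or_lt_of_le hk with rfl | hk2
  · have hblock : nacciBlock c 1 (Finset.Icc (2 - 1) 2) =
        Multiset.replicate c (nacci c 1 1) + Multiset.replicate c (nacci c 1 2) := by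
      rw [show Finset.Icc (2 - 1) 2 = insert 1 {2} by decide, nacciBlock_insert (by decide),
        nacciBlock_singleton]
    have hP :
        Multiset.replicate (c + 1) (nacci c 1 1) + Multiset.replicate c (nacci c 1 2) + D =
          nacciBlock c 1 (Finset.Icc (2 - 1) 2) + ({nacci c 1 1} + D) := by
      rw [hblock, Multiset.replicate_succ, ← Multiset.singleton_add]
      abel
    refine Or.inl ⟨2, le_rfl, by rw [hP]; exact le_add_right le_rfl, ?_⟩
    rw [hP, add_tsub_cancel_left, if_pos rfl, Multiset.insert_eq_cons, ← Multiset.singleton_add]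
    abel
  · refine Or.inr <| Or.inl ⟨2, le_rfl, hk2, ?_⟩
    rw [Finset.Icc_self, nacciBlock_singleton, if_neg hk2.ne']
    exact ⟨le_add_right le_rfl, by rw [add_tsub_cancel_left]⟩

end CkNacci

theorem winning_path_avoids_steal_pattern_ck_nacci_general (c k p m n : ℕ)
    (hc : 1 ≤ c) (hk : 1 ≤ k) (hp : 3 ≤ p)
    (σ : ℕ → Multiset ℕ → Multiset ℕ)
    (hσ : IsWinningStrategy (CkMove c k) p m (Multiset.replicate n 1) σ)
    (xs : List (Multiset ℕ))
    (hplay : IsCompletePlay (CkMove c k) (Multiset.replicate n 1) xs)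
    (hcons : Consistent σ p m xs)
    (t : ℕ) (ht : t + c + 2 < xs.length)
    (h1 : ∀ j, j ≤ c →
      Multiset.replicate (c + 1) (nacci c k 1) ≤ xs.getD (t + j) 0 ∧
      xs.getD (t + j + 1) 0 =
        xs.getD (t + j) 0 - Multiset.replicate (c + 1) (nacci c k 1) + {nacci c k 2})
    (h2 : Multiset.replicate (c + 1) (nacci c k 2) ≤ xs.getD (t + c + 1) 0 ∧
      xs.getD (t + c + 2) 0 =
        xs.getD (t + c + 1) 0 - Multiset.replicate (c + 1) (nacci c k 2) +
          (if k = 1 then ({nacci c k 3, nacci c k 1} : Multiset ℕ) else {nacci c k 3})) :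
    (t + c) % p + 1 = m := by
  by_contra hnm
  obtain ⟨hP, hQ⟩ := h1 c le_rfl
  rw [hQ] at h2
  -- The opponent making move `t + c` could instead play both remaining moves at once.
  have hmove := CkNacci.ckMove_of_two_moves hk hP h2.1 h2.2
  have hlast : (xs.take (t + c + 1)).getLast? = some (xs.getD (t + c) 0) :=
    List.getLast?_take_succ (by omega) 0
  have hlen : (xs.take (t + c + 1)).length = t + c + 1 := by simp; omega
  refine hσ.getLast?_ne_of_length_eq_succ (CkNacci.wellFounded_flip_ckMove hc hk) (by omega)
    ((hplay.1.take _).append_singleton hlast hmove)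
    ((hcons.take _).append_singleton hlast fun h ↦ absurd (by simpa [hlen] using h) hnm)
    (hplay.1.take (t + c + 2)) (hcons.take _) (by simp; omega) (by simp; omega) ?_
  rw [List.getLast?_append_of_ne_nil _ (List.cons_ne_nil _ _), List.getLast?_take_succ ht]
  rfl

/-- Let `p ≥ 3` and suppose player `m` (`1 ≤ m ≤ p`) has a winning strategy `σ` in the
`p`-player `(c,k)`-nacci Zeckendorf game on `n`.  Then no complete play consistent with
`σ` contains the following `c+2` consecutive moves — `c+1` moves each replacing `c+1`
copies of `S₁` by `S₂`, followed by the move replacing `c+1` copies of `S₂` by `S₃` and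
`S₁` (if `k = 1`) or by `S₃` (if `k > 1`) — unless player `m` is the one who makes the
`(c+1)`-st of these moves (move number `t + c`). -/
theorem winning_path_avoids_steal_pattern_ck_nacci (c k p m n : ℕ)
    (hc : 1 ≤ c) (hk : 1 ≤ k) (hp : 3 ≤ p) (hm1 : 1 ≤ m) (hmp : m ≤ p)
    (σ : ℕ → Multiset ℕ → Multiset ℕ)
    (hσ : IsWinningStrategy (CkMove c k) p m (Multiset.replicate n 1) σ)
    (xs : List (Multiset ℕ))
    (hplay : IsCompletePlay (CkMove c k) (Multiset.replicate n 1) xs)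
    (hcons : Consistent σ p m xs)
    (t : ℕ) (ht : t + c + 2 < xs.length)
    (h1 : ∀ j, j ≤ c →
      Multiset.replicate (c + 1) (nacci c k 1) ≤ xs.getD (t + j) 0 ∧
      xs.getD (t + j + 1) 0 =
        xs.getD (t + j) 0 - Multiset.replicate (c + 1) (nacci c k 1) + {nacci c k 2})
    (h2 : Multiset.replicate (c + 1) (nacci c k 2) ≤ xs.getD (t + c + 1) 0 ∧
      xs.getD (t + c + 2) 0 =
        xs.getD (t + c + 1) 0 - Multiset.replicate (c + 1) (nacci c k 2) +
          (if k = 1 then ({nacci c k 3, nacci c k 1} : Multiset ℕ) else {nacci c k 3})) :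
    (t + c) % p + 1 = m :=
  winning_path_avoids_steal_pattern_ck_nacci_general c k p m n hc hk hp σ hσ xs hplay hcons t ht h1
    h2
end

section
/- For every c >= 1, k >= 1, every n >= 2c^2 + 5c + 3, and every number of players p >= c + 3, no player has a winning strategy in the p-player (c,k)-nacci Zeckendorf game on n. -/
lemma nacci_one (c k : ℕ) : nacci c k 1 = 1 := by simp [nacci]

lemma nacci_two_eq (c k : ℕ) (hk : 1 ≤ k) : nacci c k 2 = c + 1 := by
  rw [show (2:ℕ) = 0 + 2 from rfl, nacci]
  rw [if_pos (by omega : 0 + 1 ≤ k)]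
  rw [Finset.sum_attach (Finset.range (0+1)) (fun j => nacci c k (j + 1))]
  simp [nacci_one]

lemma nacci_pos (c k : ℕ) (hc : 1 ≤ c) (hk : 1 ≤ k) : ∀ i, 1 ≤ i → 1 ≤ nacci c k i := by
  intro i
  induction i using Nat.strong_induction_on with
  | _ i ih =>
    intro hi
    match i, hi with
    | 1, _ => simp [nacci_one]
    | (j+2), _ =>
      rw [nacci]
      split
      · exact Nat.le_add_left 1 _
      · rename_i hjk
        rw [Finset.sum_attach (Finset.Icc (j+1-k) (j+1)) (fun x => nacci c k x)]
        have hmem : j + 1 ∈ Finset.Icc (j+1-k) (j+1) := by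
          rw [Finset.mem_Icc]; omega
        have h1 : 1 ≤ nacci c k (j+1) := ih (j+1) (by omega) (by omega)
        have hle : nacci c k (j+1) ≤ ∑ x ∈ Finset.Icc (j+1-k) (j+1), nacci c k x :=
          Finset.single_le_sum (f := fun x => nacci c k x) (fun i _ => Nat.zero_le _) hmem
        calc 1 ≤ 1 * 1 := by omega
        _ ≤ c * nacci c k (j+1) := Nat.mul_le_mul hc h1
        _ ≤ c * ∑ x ∈ Finset.Icc (j+1-k) (j+1), nacci c k x := Nat.mul_le_mul_left c hle

lemma nacci_ge_two (c k : ℕ) (hc : 1 ≤ c) (hk : 1 ≤ k) : ∀ i, 2 ≤ i → 2 ≤ nacci c k i := by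
  intro i hi
  match i, hi with
  | (j+2), _ =>
    rw [nacci]
    split
    · rename_i hjk
      rw [Finset.sum_attach (Finset.range (j+1)) (fun x => nacci c k (x + 1))]
      have hmem : 0 ∈ Finset.range (j+1) := by simp
      have hle : nacci c k (0+1) ≤ ∑ x ∈ Finset.range (j+1), nacci c k (x+1) :=
        Finset.single_le_sum (f := fun x => nacci c k (x+1)) (fun i _ => Nat.zero_le _) hmem
      rw [nacci_one] at hle
      have : 1 ≤ c * ∑ x ∈ Finset.range (j+1), nacci c k (x+1) :=
        le_trans (by omega : 1 ≤ 1*1) (Nat.mul_le_mul hc hle)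
      omega
    · rename_i hjk
      rw [Finset.sum_attach (Finset.Icc (j+1-k) (j+1)) (fun x => nacci c k x)]
      have hne : j+1-k ≠ j+1 := by omega
      have hsub : ({j+1-k, j+1} : Finset ℕ) ⊆ Finset.Icc (j+1-k) (j+1) := by
        intro x hx
        simp only [Finset.mem_insert, Finset.mem_singleton] at hx
        rw [Finset.mem_Icc]; omega
      have hpair : ∑ x ∈ ({j+1-k, j+1} : Finset ℕ), nacci c k x
          ≤ ∑ x ∈ Finset.Icc (j+1-k) (j+1), nacci c k x :=
        Finset.sum_le_sum_of_subset hsub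
      rw [Finset.sum_pair hne] at hpair
      have h1 : 1 ≤ nacci c k (j+1-k) := nacci_pos c k hc hk _ (by omega)
      have h2 : 1 ≤ nacci c k (j+1) := nacci_pos c k hc hk _ (by omega)
      have h3 : 2 ≤ ∑ x ∈ Finset.Icc (j+1-k) (j+1), nacci c k x := by omega
      calc 2 ≤ 1 * 2 := by omega
      _ ≤ c * ∑ x ∈ Finset.Icc (j+1-k) (j+1), nacci c k x := Nat.mul_le_mul hc h3

open Multiset in
lemma count_nacciBlock (c k a : ℕ) (s : Finset ℕ) :
    Multiset.count a (nacciBlock c k s) = ∑ j ∈ s, if nacci c k j = a then c else 0 := by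
  rw [nacciBlock, Multiset.count_bind]
  simp only [Multiset.count_replicate]
  rfl

open Multiset in
lemma count_one_block_le (c k i : ℕ) (hc : 1 ≤ c) (hk : 1 ≤ k) (hik : k + 1 ≤ i) :
    Multiset.count 1 (nacciBlock c k (Finset.Icc (i-k) i)) ≤ c := by
  rw [count_nacciBlock]
  calc ∑ j ∈ Finset.Icc (i-k) i, (if nacci c k j = 1 then c else 0)
      ≤ ∑ j ∈ Finset.Icc (i-k) i, (if j = 1 then c else 0) := by
        apply Finset.sum_le_sum
        intro j hj
        rw [Finset.mem_Icc] at hj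
        by_cases hj1 : j = 1
        · subst hj1; simp [nacci_one]
        · have : 2 ≤ nacci c k j := nacci_ge_two c k hc hk j (by omega)
          rw [if_neg (by omega), if_neg hj1]
    _ = if 1 ∈ Finset.Icc (i-k) i then c else 0 := Finset.sum_ite_eq' _ 1 (fun _ => c)
    _ ≤ c := by split <;> omega

open Multiset in
lemma count_one_block_two (c k i : ℕ) (hc : 1 ≤ c) (hk : 1 ≤ k) :
    Multiset.count 1 (nacciBlock c k (Finset.Icc 2 i)) = 0 := by
  rw [count_nacciBlock]
  apply Finset.sum_eq_zero
  intro j hj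
  rw [Finset.mem_Icc] at hj
  have : 2 ≤ nacci c k j := nacci_ge_two c k hc hk j (by omega)
  rw [if_neg (by omega)]

/-- Every move consumes at most `c+1` ones. -/
lemma count_one_move (c k : ℕ) (hc : 1 ≤ c) (hk : 1 ≤ k) {A B : Multiset ℕ}
    (h : CkMove c k A B) : Multiset.count 1 A ≤ Multiset.count 1 B + (c+1) := by
  have hrep : ∀ (j v : ℕ), Multiset.count 1 (Multiset.replicate j v) ≤ j := by
    intro j v; rw [Multiset.count_replicate]; split <;> omega
  rcases h with ⟨i, hi, hle, rfl⟩ | ⟨i, hi2, hik, hle, rfl⟩ | ⟨hle, rfl⟩ |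
    ⟨i, hi1, hik, hle, rfl⟩ | ⟨hle, rfl⟩ | ⟨i, hi, hle, rfl⟩
  · have hX := count_one_block_le c k i hc hk hi
    rw [Multiset.count_add, Multiset.count_sub]
    omega
  · rw [Multiset.count_add, Multiset.count_sub, Multiset.count_add,
      count_one_block_two c k i hc hk, nacci_one, Multiset.count_replicate_self]
    omega
  · rw [Multiset.count_add, Multiset.count_sub, nacci_one, Multiset.count_replicate_self]
    omega
  · have hX := hrep (c+1) (nacci c k i)
    rw [Multiset.count_add, Multiset.count_sub]
    omega
  · have hX := hrep (c+1) (nacci c k (k+1))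
    rw [Multiset.count_add, Multiset.count_sub]
    omega
  · have hX := hrep (c+1) (nacci c k i)
    rw [Multiset.count_add, Multiset.count_sub]
    omega

/-- The basic move: `c+1` ones become an `S_2`. -/
lemma ckmove_3a (c k : ℕ) {A : Multiset ℕ} (h : c + 1 ≤ Multiset.count 1 A) :
    CkMove c k A (A - Multiset.replicate (c+1) 1 + {nacci c k 2}) := by
  refine Or.inr (Or.inr (Or.inl ⟨?_, ?_⟩)) <;> rw [nacci_one]
  exact Multiset.le_count_iff_replicate_le.mp h

lemma not_terminal_of_count (c k : ℕ) {B : Multiset ℕ} (h : c + 1 ≤ Multiset.count 1 B) :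
    ¬ Terminal (CkMove c k) B := fun ht => ht _ (ckmove_3a c k h)

lemma count_3a_one (c k : ℕ) (hc : 1 ≤ c) (hk : 1 ≤ k) (A : Multiset ℕ) :
    Multiset.count 1 (A - Multiset.replicate (c+1) 1 + {nacci c k 2}) =
      Multiset.count 1 A - (c+1) := by
  have h2 : 2 ≤ nacci c k 2 := nacci_ge_two c k hc hk 2 le_rfl
  rw [Multiset.count_add, Multiset.count_sub, Multiset.count_replicate_self,
    Multiset.count_singleton, if_neg (by omega)]
  omega

lemma count_3a_two (c k : ℕ) (hc : 1 ≤ c) (hk : 1 ≤ k) (A : Multiset ℕ) :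
    Multiset.count (nacci c k 2) (A - Multiset.replicate (c+1) 1 + {nacci c k 2}) =
      Multiset.count (nacci c k 2) A + 1 := by
  have h2 : 2 ≤ nacci c k 2 := nacci_ge_two c k hc hk 2 le_rfl
  rw [Multiset.count_add, Multiset.count_sub, Multiset.count_replicate,
    if_neg (by omega), Multiset.count_singleton, if_pos rfl]
  omega

lemma terminal_no_win {Move : Multiset ℕ → Multiset ℕ → Prop} {p : ℕ} {team : ℕ → Prop}
    {t : ℕ} {pos : Multiset ℕ} (ht : Terminal Move pos) :
    ¬ AllianceWins Move p team t pos := by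
  intro h
  cases h with
  | endMove t pos B hturn hmove hterm => exact ht B hmove
  | contMove t pos B hturn hmove hwin => exact ht B hmove
  | oppMove t pos hturn hex hall => obtain ⟨B, hB⟩ := hex; exact ht B hB

lemma mod_succ_ne {p t t' : ℕ} (h : t % p ≠ t' % p) : (t+1) % p ≠ (t'+1) % p := by
  intro he
  exact h (Nat.ModEq.add_right_cancel' 1 he)

lemma mod_add_ne {p t e : ℕ} (h0 : 0 < e) (he : e < p) : (t + e) % p ≠ t % p := by
  intro h
  have hmod : p ∣ (t + e) - t :=
    (Nat.modEq_iff_dvd' (Nat.le_add_right t e)).mp (h.symm : Nat.ModEq p t (t+e))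
  rw [Nat.add_sub_cancel_left] at hmod
  exact absurd (Nat.le_of_dvd h0 hmod) (by omega)

/-- A single player cannot have winning strategies at two different times mod `p`
from the same position. -/
lemma disj {Move : Multiset ℕ → Multiset ℕ → Prop} {p m : ℕ} :
    ∀ {t pos}, AllianceWins Move p (fun q => q = m) t pos →
      ∀ t', t' % p ≠ t % p → AllianceWins Move p (fun q => q = m) t' pos → False := by
  intro t pos h
  induction h with
  | endMove t pos B hturn hmove hterm =>
    intro t' hne h2
    cases h2 with
    | endMove _ _ B' hturn' hmove' hterm' => exact hne (by have h1 : t % p + 1 = m := hturn; have h2 : t' % p + 1 = m := hturn'; omega)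
    | contMove _ _ B' hturn' hmove' hwin' => exact hne (by have h1 : t % p + 1 = m := hturn; have h2 : t' % p + 1 = m := hturn'; omega)
    | oppMove _ _ hturn' hex' hall' => exact terminal_no_win hterm (hall' B hmove)
  | contMove t pos B hturn hmove hwin ih =>
    intro t' hne h2
    cases h2 with
    | endMove _ _ B' hturn' hmove' hterm' => exact hne (by have h1 : t % p + 1 = m := hturn; have h2 : t' % p + 1 = m := hturn'; omega)
    | contMove _ _ B' hturn' hmove' hwin' => exact hne (by have h1 : t % p + 1 = m := hturn; have h2 : t' % p + 1 = m := hturn'; omega)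
    | oppMove _ _ hturn' hex' hall' =>
      exact ih (t'+1) (mod_succ_ne hne) (hall' B hmove)
  | oppMove t pos hturn hex hall ih =>
    intro t' hne h2
    cases h2 with
    | endMove _ _ B' hturn' hmove' hterm' =>
      exact terminal_no_win hterm' (hall B' hmove')
    | contMove _ _ B' hturn' hmove' hwin' =>
      exact ih B' hmove' (t'+1) (mod_succ_ne hne) hwin'
    | oppMove _ _ hturn' hex' hall' =>
      obtain ⟨B, hB⟩ := hex
      exact ih B hB (t'+1) (mod_succ_ne hne) (hall' B hB)

lemma count_block12 (c k a : ℕ) : Multiset.count a (nacciBlock c k (Finset.Icc 1 2)) =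
    (if nacci c k 1 = a then c else 0) + (if nacci c k 2 = a then c else 0) := by
  rw [count_nacciBlock, show (2:ℕ) = 1 + 1 from rfl, Finset.sum_Icc_succ_top (by omega),
    Finset.Icc_self, Finset.sum_singleton]

/-- The diamond lemma: from a position with `c+1` ones and `c` twos, if two consecutive
turns belong to opponents of `m`, then `m` cannot win. -/
lemma lemA (c k p m : ℕ) (hc : 1 ≤ c) (hk : 1 ≤ k) (hp : 2 ≤ p) {t : ℕ} {X : Multiset ℕ}
    (ht : ¬ t % p + 1 = m) (ht1 : ¬ (t+1) % p + 1 = m)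
    (h1 : c + 1 ≤ Multiset.count 1 X) (h2 : c ≤ Multiset.count (nacci c k 2) X) :
    ¬ AllianceWins (CkMove c k) p (fun q => q = m) t X := by
  intro D
  have hS2 : 2 ≤ nacci c k 2 := nacci_ge_two c k hc hk 2 le_rfl
  have hS3 : 2 ≤ nacci c k 3 := nacci_ge_two c k hc hk 3 (by omega)
  cases D with
  | endMove _ _ B hturn hmove hterm => exact ht hturn
  | contMove _ _ B hturn hmove hwin => exact ht hturn
  | oppMove _ _ hturn hex hall =>
    have hβ : CkMove c k X (X - Multiset.replicate (c+1) 1 + {nacci c k 2}) :=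
      ckmove_3a c k h1
    have Dβ := hall _ hβ
    have hcnt2B1 := count_3a_two c k hc hk X
    have hcnt1B1 := count_3a_one c k hc hk X
    cases Dβ with
    | endMove _ _ B hturn' hmove' hterm' => exact ht1 hturn'
    | contMove _ _ B hturn' hmove' hwin' => exact ht1 hturn'
    | oppMove _ _ hturn' hex' hall' =>
      have hγle : Multiset.replicate (c+1) (nacci c k 2) ≤
          (X - Multiset.replicate (c+1) 1 + {nacci c k 2}) :=
        Multiset.le_count_iff_replicate_le.mp (by omega)
      rcases Nat.lt_or_ge k 2 with hk2 | hk2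
      · -- k = 1 : use move (1) with i = 2 versus (3a) then (3c)
        have hk1 : k = 1 := by omega
        subst hk1
        have hγ : CkMove c 1 (X - Multiset.replicate (c+1) 1 + {nacci c 1 2})
            ((X - Multiset.replicate (c+1) 1 + {nacci c 1 2})
              - Multiset.replicate (c+1) (nacci c 1 (1+1))
              + {nacci c 1 (1+2), nacci c 1 1}) :=
          Or.inr (Or.inr (Or.inr (Or.inr (Or.inl ⟨hγle, rfl⟩))))
        have Dγ := hall' _ hγ
        have hαle : nacciBlock c 1 (Finset.Icc (2-1) 2) ≤ X := by
          rw [Multiset.le_iff_count]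
          intro a
          rw [show ((2:ℕ)-1) = 1 from rfl, count_block12, nacci_one]
          by_cases e1 : a = 1
          · subst e1; split_ifs <;> omega
          · by_cases e2 : a = nacci c 1 2
            · subst e2; split_ifs <;> omega
            · split_ifs <;> omega
        have hα : CkMove c 1 X (X - nacciBlock c 1 (Finset.Icc (2-1) 2) + {nacci c 1 (2+1)}) :=
          Or.inl ⟨2, by omega, hαle, rfl⟩
        have Dα := hall _ hα
        have hQ : (X - Multiset.replicate (c+1) 1 + {nacci c 1 2})
              - Multiset.replicate (c+1) (nacci c 1 (1+1))
              + {nacci c 1 (1+2), nacci c 1 1}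
            = X - nacciBlock c 1 (Finset.Icc (2-1) 2) + {nacci c 1 (2+1)} := by
          refine Multiset.ext.mpr fun a => ?_
          rw [show ((2:ℕ)-1) = 1 from rfl]
          simp only [show ((1:ℕ)+1) = 2 from rfl, show ((1:ℕ)+2) = 3 from rfl,
            show ((2:ℕ)+1) = 3 from rfl, nacci_one, Multiset.insert_eq_cons,
            Multiset.count_cons, Multiset.count_add, Multiset.count_sub,
            Multiset.count_replicate, Multiset.count_singleton, count_block12]
          by_cases e1 : a = 1
          · subst e1; split_ifs <;> omega
          · by_cases e2 : a = nacci c 1 2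
            · subst e2; split_ifs <;> omega
            · by_cases e3 : a = nacci c 1 3
              · subst e3; split_ifs <;> omega
              · split_ifs <;> omega
        rw [hQ] at Dγ
        exact disj Dα (t+1+1) (mod_add_ne (t := t+1) (e := 1) one_pos (by omega)) Dγ
      · -- k ≥ 2 : use move (2) with i = 2 versus (3a) then (3b)
        have hγ : CkMove c k (X - Multiset.replicate (c+1) 1 + {nacci c k 2})
            ((X - Multiset.replicate (c+1) 1 + {nacci c k 2})
              - Multiset.replicate (c+1) (nacci c k 2) + {nacci c k (2+1)}) :=
          Or.inr (Or.inr (Or.inr (Or.inl ⟨2, by omega, by omega, hγle, rfl⟩)))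
        have Dγ := hall' _ hγ
        have hblock : ∀ a, Multiset.count a (nacciBlock c k (Finset.Icc 2 2)) =
            if nacci c k 2 = a then c else 0 := by
          intro a; rw [count_nacciBlock, Finset.Icc_self, Finset.sum_singleton]
        have hαle : Multiset.replicate (c+1) (nacci c k 1) + nacciBlock c k (Finset.Icc 2 2)
            ≤ X := by
          rw [Multiset.le_iff_count]
          intro a
          rw [Multiset.count_add, hblock, nacci_one, Multiset.count_replicate]
          by_cases e1 : a = 1
          · subst e1; split_ifs <;> omega
          · by_cases e2 : a = nacci c k 2
            · subst e2; split_ifs <;> omega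
            · split_ifs <;> omega
        have hα : CkMove c k X
            (X - (Multiset.replicate (c+1) (nacci c k 1) + nacciBlock c k (Finset.Icc 2 2))
              + {nacci c k (2+1)}) :=
          Or.inr (Or.inl ⟨2, le_rfl, hk2, hαle, rfl⟩)
        have Dα := hall _ hα
        have hQ : (X - Multiset.replicate (c+1) 1 + {nacci c k 2})
              - Multiset.replicate (c+1) (nacci c k 2) + {nacci c k (2+1)}
            = X - (Multiset.replicate (c+1) (nacci c k 1) + nacciBlock c k (Finset.Icc 2 2))
              + {nacci c k (2+1)} := by
          refine Multiset.ext.mpr fun a => ?_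
          simp only [show ((2:ℕ)+1) = 3 from rfl, nacci_one,
            Multiset.count_add, Multiset.count_sub,
            Multiset.count_replicate, Multiset.count_singleton, hblock]
          by_cases e1 : a = 1
          · subst e1; split_ifs <;> omega
          · by_cases e2 : a = nacci c k 2
            · subst e2; split_ifs <;> omega
            · split_ifs <;> omega
        rw [hQ] at Dγ
        exact disj Dα (t+1+1) (mod_add_ne (t := t+1) (e := 1) one_pos (by omega)) Dγ

/-- Opponents build up `s` more twos with basic moves, then apply the diamond. -/
lemma lemB (c k p m : ℕ) (hc : 1 ≤ c) (hk : 1 ≤ k) (hp : 2 ≤ p) :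
    ∀ (s t : ℕ) (X : Multiset ℕ),
      (∀ e, e ≤ s + 1 → ¬ (t + e) % p + 1 = m) →
      (s+1) * (c+1) ≤ Multiset.count 1 X →
      c ≤ Multiset.count (nacci c k 2) X + s →
      ¬ AllianceWins (CkMove c k) p (fun q => q = m) t X := by
  intro s
  induction s with
  | zero =>
    intro t X hcoal hc1 hc2
    exact lemA c k p m hc hk hp
      (by have := hcoal 0 (by omega); simpa using this)
      (by have := hcoal 1 (by omega); simpa using this)
      (by omega) (by omega)
  | succ s ih =>
    intro t X hcoal hc1 hc2
    intro D
    cases D with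
    | endMove _ _ B hturn hmove hterm =>
      exact (by have := hcoal 0 (by omega); simpa using this : ¬ t % p + 1 = m) hturn
    | contMove _ _ B hturn hmove hwin =>
      exact (by have := hcoal 0 (by omega); simpa using this : ¬ t % p + 1 = m) hturn
    | oppMove _ _ hturn hex hall =>
      have hsm : (s+1+1) * (c+1) = (s+1) * (c+1) + (c+1) := by ring
      have hβ : CkMove c k X (X - Multiset.replicate (c+1) 1 + {nacci c k 2}) :=
        ckmove_3a c k (by omega)
      have h1' := count_3a_one c k hc hk X
      have h2' := count_3a_two c k hc hk X
      refine ih (t+1) _ ?_ (by omega) (by omega) (hall _ hβ)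
      intro e he
      have := hcoal (e+1) (by omega)
      rwa [show t + (e+1) = t + 1 + e by omega] at this

/-- At `m`'s turn with plenty of ones, `m` cannot win. -/
lemma lemC (c k p m : ℕ) (hc : 1 ≤ c) (hk : 1 ≤ k) (hp : c + 3 ≤ p) {t : ℕ} {X : Multiset ℕ}
    (ht : t % p + 1 = m) (h1 : (c+1) * (c+2) ≤ Multiset.count 1 X) :
    ¬ AllianceWins (CkMove c k) p (fun q => q = m) t X := by
  have hsq : (c+1) * (c+2) = (c+1) * (c+1) + (c+1) := by ring
  have hg1 : (c+1) ≤ (c+1) * (c+1) := Nat.le_mul_of_pos_left (c+1) (by omega)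
  intro D
  cases D with
  | endMove _ _ B hturn hmove hterm =>
    have hd := count_one_move c k hc hk hmove
    exact not_terminal_of_count c k (by omega) hterm
  | contMove _ _ B hturn hmove hwin =>
    have hd := count_one_move c k hc hk hmove
    refine lemB c k p m hc hk (by omega) c (t+1) B ?_ (by omega) (by omega) hwin
    intro e he hme
    have hne : (t + (e+1)) % p ≠ t % p := mod_add_ne (by omega) (by omega)
    rw [show t + 1 + e = t + (e+1) by omega] at hme
    omega
  | oppMove _ _ hturn hex hall => exact hturn ht

/-- Walking to `m`'s first turn. -/
lemma lemD (c k p m : ℕ) (hc : 1 ≤ c) (hk : 1 ≤ k) (hp : c + 3 ≤ p) :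
    ∀ (d t : ℕ) (X : Multiset ℕ),
      (t + d) % p + 1 = m →
      (∀ e, e < d → ¬ (t + e) % p + 1 = m) →
      (c+1) * (c+2) + d * (c+1) ≤ Multiset.count 1 X →
      ¬ AllianceWins (CkMove c k) p (fun q => q = m) t X := by
  intro d
  induction d with
  | zero =>
    intro t X hmt _ hcnt
    exact lemC c k p m hc hk hp (by simpa using hmt) (by omega)
  | succ d ih =>
    intro t X hmt hcoal hcnt
    have hsm : (d+1) * (c+1) = d * (c+1) + (c+1) := by ring
    intro D
    cases D with
    | endMove _ _ B hturn hmove hterm => exact hcoal 0 (by omega) (by simpa using hturn)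
    | contMove _ _ B hturn hmove hwin => exact hcoal 0 (by omega) (by simpa using hturn)
    | oppMove _ _ hturn hex hall =>
      have hβ : CkMove c k X (X - Multiset.replicate (c+1) 1 + {nacci c k 2}) :=
        ckmove_3a c k (by omega)
      have h1' := count_3a_one c k hc hk X
      refine ih (t+1) _ ?_ ?_ (by omega) (hall _ hβ)
      · rwa [show t + 1 + d = t + (d+1) by omega]
      · intro e he
        have := hcoal (e+1) (by omega)
        rwa [show t + (e+1) = t + 1 + e by omega] at this

/-- For every `c ≥ 1`, `k ≥ 1`, every `n ≥ 2c² + 5c + 3`, and every number of players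
`p ≥ c + 3`, no player has a winning strategy in the `p`-player `(c,k)`-nacci
Zeckendorf game on `n`. -/
theorem multiplayer_ck_nacci_no_winner_of_many_players (c k n p : ℕ)
    (hc : 1 ≤ c) (hk : 1 ≤ k) (hn : 2 * c ^ 2 + 5 * c + 3 ≤ n) (hp : c + 3 ≤ p) :
    ∀ m, 1 ≤ m → m ≤ p → ¬ PlayerWins (CkMove c k) p m n := by
  intro m hm1 hmp hPW
  rw [PlayerWins] at hPW
  have hcnt : Multiset.count 1 (Multiset.replicate n 1) = n :=
    Multiset.count_replicate_self 1 n
  by_cases hm : m ≤ c + 2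
  · -- m moves within the first c+2 turns
    have hmod : (0 + (m-1)) % p = m - 1 := by
      rw [Nat.zero_add, Nat.mod_eq_of_lt (by omega)]
    have hmul : (m-1) * (c+1) ≤ (c+1) * (c+1) :=
      Nat.mul_le_mul_right (c+1) (by omega)
    have hexp : (c+1) * (c+2) + (c+1) * (c+1) = 2 * c ^ 2 + 5 * c + 3 := by ring
    refine lemD c k p m hc hk hp (m-1) 0 _ (by omega) ?_ (by omega) hPW
    intro e he
    rw [Nat.zero_add, Nat.mod_eq_of_lt (by omega)]
    omega
  · -- the first c+2 turns all belong to opponents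
    have hexp2 : (c+1) * (c+1) = c ^ 2 + 2 * c + 1 := by ring
    refine lemB c k p m hc hk (by omega) c 0 _ ?_ (by omega) (by omega) hPW
    intro e he
    rw [Nat.zero_add, Nat.mod_eq_of_lt (by omega)]
    omega
end
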